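/- arXiv:1410.1007 — 4 statements merged into one kernel-verified Lean document; each statement's English description precedes it below -/
import Mathlib

section
/- Let n ≥ 2 be an integer and let a, b ∈ ℝ with 0 ≤ a < b. There exists an n-system P: [a, b] → ℝ^n such that P(a) = (a/n, …, a/n) and P(b) = (b/n, …, b/n). -/
noncomputable section

/-- `D` is a discrete subset of `I`: every point of `I` has a neighbourhood
meeting `D` in at most itself. -/
def DiscreteIn (D I : Set ℝ) : Prop :=
  D ⊆ I ∧ ∀ q ∈ I, ∃ ε > (0 : ℝ), D ∩ Set.Ioo (q - ε) (q + ε) ⊆ {q}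

/-- The set of points of `I` at which `P` is not differentiable, including the
boundary points of `I` that lie in `I`. -/
def NonDiffSet (n : ℕ) (I : Set ℝ) (P : ℝ → Fin n → ℝ) : Set ℝ :=
  {q ∈ I | q ∈ frontier I ∨ ¬DifferentiableAt ℝ P q}

/-- `P` is continuous piecewise linear on `I`: it is continuous on `I`, the set `D`
of points of `I` at which it is not differentiable (including boundary points of `I`
lying in `I`) is a discrete subset of `I`, and its derivative is locally constant
on `I \ D`. -/
def ContPiecewiseLinearOn (n : ℕ) (I : Set ℝ) (P : ℝ → Fin n → ℝ) : Prop :=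
  ContinuousOn P I ∧
  DiscreteIn (NonDiffSet n I P) I ∧
  ∀ q ∈ I \ NonDiffSet n I P, ∃ ε > (0 : ℝ),
    ∀ x ∈ (I \ NonDiffSet n I P) ∩ Set.Ioo (q - ε) (q + ε), deriv P x = deriv P q

/-- An `n`-system on `I` (Definition 4.1): conditions (S1), (S2), (S3). -/
def IsNSystem (n : ℕ) (I : Set ℝ) (P : ℝ → Fin n → ℝ) : Prop :=
  ContPiecewiseLinearOn n I P ∧
  -- (S1)
  (∀ q ∈ I, ((∀ i, 0 ≤ P q i) ∧ Monotone (P q)) ∧ ∑ i, P q i = q) ∧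
  -- (S2)
  (∀ a b : ℝ, a < b → Set.Ioo a b ⊆ I →
    (∀ q ∈ Set.Ioo a b, DifferentiableAt ℝ P q) →
    ∃ r : Fin n, (∀ q ∈ Set.Ioo a b, deriv (fun x => P x r) q = 1) ∧
      ∀ j : Fin n, j ≠ r → ∀ p ∈ Set.Ioo a b, ∀ q ∈ Set.Ioo a b, P p j = P q j) ∧
  -- (S3)
  (∀ q ∈ interior I, ¬DifferentiableAt ℝ P q →
    ∀ r s : Fin n, derivWithin (fun x => P x r) (Set.Iic q) q = 1 →
      derivWithin (fun x => P x s) (Set.Ici q) q = 1 → r < s →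
      ∀ i : Fin n, r ≤ i → i ≤ s → P q i = P q r)

/-- A generalized `n`-system on `I` (Definition 4.4): conditions (G1), (G2), (G3). -/
def IsGenNSystem (n : ℕ) (I : Set ℝ) (P : ℝ → Fin n → ℝ) : Prop :=
  ContPiecewiseLinearOn n I P ∧
  -- (G1)
  (∀ q ∈ I, ((∀ i, 0 ≤ P q i) ∧ Monotone (P q)) ∧ ∑ i, P q i = q) ∧
  -- (G2)
  (∀ a b : ℝ, a < b → Set.Ioo a b ⊆ I →
    (∀ q ∈ Set.Ioo a b, DifferentiableAt ℝ P q) →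
    ∃ rlo rhi : Fin n, rlo ≤ rhi ∧
      (∀ j : Fin n, rlo ≤ j → j ≤ rhi → ∀ q ∈ Set.Ioo a b,
        P q j = P q rlo ∧
        deriv (fun x => P x j) q = 1 / (((rhi : ℕ) : ℝ) - ((rlo : ℕ) : ℝ) + 1)) ∧
      (∀ j : Fin n, j < rlo ∨ rhi < j →
        ∀ p ∈ Set.Ioo a b, ∀ q ∈ Set.Ioo a b, P p j = P q j)) ∧
  -- (G3)
  (∀ q ∈ interior I, ¬DifferentiableAt ℝ P q →
    ∀ rlo rhi slo shi : Fin n, rlo ≤ rhi → slo ≤ shi →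
      (∀ j : Fin n, rlo ≤ j → j ≤ rhi →
        derivWithin (fun x => P x j) (Set.Iic q) q
          = 1 / (((rhi : ℕ) : ℝ) - ((rlo : ℕ) : ℝ) + 1)) →
      (∀ j : Fin n, slo ≤ j → j ≤ shi →
        derivWithin (fun x => P x j) (Set.Ici q) q
          = 1 / (((shi : ℕ) : ℝ) - ((slo : ℕ) : ℝ) + 1)) →
      rlo < shi →
      ∀ i : Fin n, rlo ≤ i → i ≤ shi → P q i = P q rlo)

/-!
Put `h = (b - a) / n`. Coordinate `i` of the system rests at `a / n` until time `b - (i + 1) h`,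
then rises with slope `1` for a time `h`, and rests at `b / n` afterwards. These ramps tile
`[a, b]` from the last coordinate down to the first, so exactly one coordinate moves at a time,
the coordinates stay ordered, and their sum is `a + (q - a) = q`. At a switch the moving index
drops by one, whereas (S3) only restricts switches to a larger index, so (S3) holds vacuously.
-/

open Set Filter Topology

lemma DiscreteIn.of_finite {D I : Set ℝ} (hD : D.Finite) (hDI : D ⊆ I) : DiscreteIn D I := by
  refine ⟨hDI, fun q _ => ?_⟩
  obtain ⟨ε, hε, hball⟩ :=
    Metric.isOpen_iff.1 (hD.sdiff (t := {q})).isClosed.isOpen_compl q (by simp)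
  refine ⟨ε, hε, fun x ⟨hxD, hx⟩ => ?_⟩
  rw [← Real.ball_eq_Ioo] at hx
  by_contra hxq
  exact hball hx ⟨hxD, hxq⟩

lemma not_differentiableAt_of_hasDerivWithinAt_Iic_Ici {f : ℝ → ℝ} {x d₁ d₂ : ℝ}
    (h₁ : HasDerivWithinAt f d₁ (Iic x) x) (h₂ : HasDerivWithinAt f d₂ (Ici x) x)
    (hne : d₁ ≠ d₂) : ¬DifferentiableAt ℝ f x := fun hf =>
  hne <| ((uniqueDiffWithinAt_Iic x).eq_deriv _ h₁ hf.hasDerivAt.hasDerivWithinAt).trans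
    ((uniqueDiffWithinAt_Ici x).eq_deriv _ h₂ hf.hasDerivAt.hasDerivWithinAt).symm

lemma derivWithin_eq_zero_of_eqOn_const {f : ℝ → ℝ} {s : Set ℝ} {x C : ℝ}
    (hf : EqOn f (fun _ => C) s) (hx : x ∈ s) : derivWithin f s x = 0 := by
  rw [derivWithin_congr hf (hf hx), derivWithin_fun_const, Pi.zero_apply]

lemma Set.OrdConnected.subset_Iio_or_subset_Ioi {α : Type*} [LinearOrder α] {s : Set α} {c : α}
    (hs : s.OrdConnected) (hc : c ∉ s) : s ⊆ Iio c ∨ s ⊆ Ioi c := by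
  by_contra! h
  simp only [not_subset, mem_Iio, mem_Ioi, not_lt] at h
  obtain ⟨⟨x, hxs, hcx⟩, ⟨y, hys, hyc⟩⟩ := h
  exact hc (hs.out hys hxs ⟨hyc, hcx⟩)

def ramp (c h x : ℝ) : ℝ := max 0 (min (x - c) h)

section Ramp

variable {c h x : ℝ}

lemma ramp_of_le (hh : 0 ≤ h) (hx : x ≤ c) : ramp c h x = 0 := by
  rw [ramp, min_eq_left (by linarith), max_eq_left (by linarith)]

lemma ramp_of_mem_Icc (hx : x ∈ Icc c (c + h)) : ramp c h x = x - c := by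
  rw [ramp, min_eq_left (by linarith [hx.2]), max_eq_right (by linarith [hx.1])]

lemma ramp_of_ge (hh : 0 ≤ h) (hx : c + h ≤ x) : ramp c h x = h := by
  rw [ramp, min_eq_right (by linarith), max_eq_right hh]

lemma ramp_nonneg (c h x : ℝ) : 0 ≤ ramp c h x := le_max_left _ _

lemma ramp_le_ramp_of_le {c c' : ℝ} (hc : c' ≤ c) (h x : ℝ) : ramp c h x ≤ ramp c' h x := by
  unfold ramp
  gcongr

lemma ramp_eq_min_sub_min (hh : 0 ≤ h) (c x : ℝ) : ramp c h x = min x (c + h) - min x c := by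
  rcases le_total x c with hxc | hcx
  · rw [ramp_of_le hh hxc, min_eq_left (by linarith), min_eq_left hxc, sub_self]
  rcases le_total x (c + h) with hxch | hchx
  · rw [ramp_of_mem_Icc ⟨hcx, hxch⟩, min_eq_left hxch, min_eq_right hcx]
  · rw [ramp_of_ge hh hchx, min_eq_right hchx, min_eq_right hcx, add_sub_cancel_left]

lemma continuous_ramp (c h : ℝ) : Continuous (ramp c h) := by
  unfold ramp
  fun_prop

lemma hasDerivAt_ramp_of_lt (hh : 0 ≤ h) (hx : x < c) : HasDerivAt (ramp c h) 0 x :=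
  (hasDerivAt_const x 0).congr_of_eventuallyEq <|
    eventuallyEq_of_mem (Iio_mem_nhds hx) fun _ hy => ramp_of_le hh (le_of_lt hy)

lemma hasDerivAt_ramp_of_mem (hx : x ∈ Ioo c (c + h)) : HasDerivAt (ramp c h) 1 x :=
  ((hasDerivAt_id x).sub_const c).congr_of_eventuallyEq <|
    eventuallyEq_of_mem (Ioo_mem_nhds hx.1 hx.2) fun _ hy =>
      ramp_of_mem_Icc (Ioo_subset_Icc_self hy)

lemma hasDerivAt_ramp_of_gt (hh : 0 ≤ h) (hx : c + h < x) : HasDerivAt (ramp c h) 0 x :=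
  (hasDerivAt_const x h).congr_of_eventuallyEq <|
    eventuallyEq_of_mem (Ioi_mem_nhds hx) fun _ hy => ramp_of_ge hh (le_of_lt hy)

lemma eventually_hasDerivAt_ramp (hh : 0 ≤ h) (hc : x ≠ c) (hch : x ≠ c + h) :
    ∃ m, ∀ᶠ y in 𝓝 x, HasDerivAt (ramp c h) m y := by
  rcases hc.lt_or_gt with hxc | hcx
  · exact ⟨0, mem_of_superset (Iio_mem_nhds hxc) fun _ hy => hasDerivAt_ramp_of_lt hh hy⟩
  rcases hch.lt_or_gt with hxch | hchx
  · exact ⟨1, mem_of_superset (Ioo_mem_nhds hcx hxch) fun _ hy => hasDerivAt_ramp_of_mem hy⟩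
  · exact ⟨0, mem_of_superset (Ioi_mem_nhds hchx) fun _ hy => hasDerivAt_ramp_of_gt hh hy⟩

lemma not_differentiableAt_ramp (hh : 0 < h) (hx : x = c ∨ x = c + h) :
    ¬DifferentiableAt ℝ (ramp c h) x := by
  have hlin : HasDerivWithinAt (ramp c h) 1 (Icc c (c + h)) x :=
    ((hasDerivAt_id x).sub_const c).hasDerivWithinAt.congr (fun _ hy => ramp_of_mem_Icc hy)
      (by rcases hx with rfl | rfl <;> exact ramp_of_mem_Icc (by simp [hh.le]))
  rcases hx with rfl | rfl
  · refine not_differentiableAt_of_hasDerivWithinAt_Iic_Ici ?_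
      (hlin.mono_of_mem_nhdsWithin (Icc_mem_nhdsGE (by linarith))) zero_ne_one
    exact (hasDerivWithinAt_const _ _ 0).congr (fun _ hy => ramp_of_le hh.le hy)
      (ramp_of_le hh.le le_rfl)
  · refine not_differentiableAt_of_hasDerivWithinAt_Iic_Ici
      (hlin.mono_of_mem_nhdsWithin (Icc_mem_nhdsLE (by linarith))) ?_ one_ne_zero
    exact (hasDerivWithinAt_const _ _ h).congr (fun _ hy => ramp_of_ge hh.le hy)
      (ramp_of_ge hh.le le_rfl)

lemma ramp_const_or_subset_Ioo (hh : 0 ≤ h) {s : Set ℝ} (hs : s.OrdConnected) (hc : c ∉ s)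
    (hch : c + h ∉ s) :
    (∀ x ∈ s, ∀ y ∈ s, ramp c h x = ramp c h y) ∨ s ⊆ Ioo c (c + h) := by
  rcases hs.subset_Iio_or_subset_Ioi hc with hlt | hgt
  · exact .inl fun x hx y hy => by
      rw [ramp_of_le hh (hlt hx).le, ramp_of_le hh (hlt hy).le]
  rcases hs.subset_Iio_or_subset_Ioi hch with hlt' | hgt'
  · exact .inr fun x hx => ⟨hgt hx, hlt' hx⟩
  · exact .inl fun x hx y hy => by
      rw [ramp_of_ge hh (hgt' hx).le, ramp_of_ge hh (hgt' hy).le]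

end Ramp

section StairSystem

variable {n : ℕ} {a b : ℝ}

def stairStep (n : ℕ) (a b : ℝ) : ℝ := (b - a) / n

def stairStart (n : ℕ) (a b : ℝ) (i : Fin n) : ℝ := b - ((i : ℕ) + 1) * stairStep n a b

def stairSystem (n : ℕ) (a b q : ℝ) (i : Fin n) : ℝ :=
  a / n + ramp (stairStart n a b i) (stairStep n a b) q

def stairKinks (n : ℕ) (a b : ℝ) : Set ℝ :=
  range (stairStart n a b) ∪ range fun i => stairStart n a b i + stairStep n a b

lemma stairStep_nonneg (hab : a ≤ b) : 0 ≤ stairStep n a b :=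
  div_nonneg (sub_nonneg.2 hab) n.cast_nonneg

lemma stairStep_pos (hn : 0 < n) (hab : a < b) : 0 < stairStep n a b :=
  div_pos (sub_pos.2 hab) (Nat.cast_pos.2 hn)

lemma natCast_mul_stairStep (hn : 0 < n) : n * stairStep n a b = b - a :=
  mul_div_cancel₀ _ (Nat.cast_ne_zero.2 hn.ne')

lemma stairStart_add_stairStep (i : Fin n) :
    stairStart n a b i + stairStep n a b = b - (i : ℕ) * stairStep n a b := by
  rw [stairStart]
  ring

lemma stairStart_add_stairStep_le_of_lt (hab : a ≤ b) {i j : Fin n} (hij : i < j) :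
    stairStart n a b j + stairStep n a b ≤ stairStart n a b i := by
  have : ((i : ℕ) + 1 : ℝ) ≤ (j : ℕ) := by exact_mod_cast hij
  rw [stairStart_add_stairStep, stairStart]
  nlinarith [stairStep_nonneg (n := n) hab]

lemma antitone_stairStart (hab : a ≤ b) : Antitone (stairStart n a b) := by
  intro i j hij
  have : ((i : ℕ) : ℝ) ≤ (j : ℕ) := by exact_mod_cast hij
  rw [stairStart, stairStart]
  nlinarith [stairStep_nonneg (n := n) hab]

lemma left_le_stairStart (hn : 0 < n) (hab : a ≤ b) (i : Fin n) : a ≤ stairStart n a b i := by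
  have : ((i : ℕ) + 1 : ℝ) ≤ n := by exact_mod_cast i.isLt
  rw [stairStart]
  nlinarith [stairStep_nonneg (n := n) hab, natCast_mul_stairStep (a := a) (b := b) hn]

lemma disjoint_stair_ramps (hab : a ≤ b) {i j : Fin n} (hij : i ≠ j) :
    Disjoint (Ioo (stairStart n a b i) (stairStart n a b i + stairStep n a b))
      (Ioo (stairStart n a b j) (stairStart n a b j + stairStep n a b)) := by
  rcases hij.lt_or_gt with hlt | hgt
  · have := stairStart_add_stairStep_le_of_lt hab hlt
    exact disjoint_left.2 fun x hi hj => by linarith [hi.1, hj.2]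
  · have := stairStart_add_stairStep_le_of_lt hab hgt
    exact disjoint_left.2 fun x hi hj => by linarith [hi.2, hj.1]

lemma continuous_stairSystem (n : ℕ) (a b : ℝ) : Continuous (stairSystem n a b) :=
  continuous_pi fun _ => continuous_const.add (continuous_ramp _ _)

lemma stairSystem_left (hn : 0 < n) (hab : a ≤ b) (i : Fin n) :
    stairSystem n a b a i = a / n := by
  rw [stairSystem, ramp_of_le (stairStep_nonneg hab) (left_le_stairStart hn hab i), add_zero]

lemma stairSystem_right (hab : a ≤ b) (i : Fin n) : stairSystem n a b b i = b / n := by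
  have hle : stairStart n a b i + stairStep n a b ≤ b := by
    rw [stairStart_add_stairStep]
    nlinarith [stairStep_nonneg (n := n) hab, (Nat.cast_nonneg (i : ℕ) : (0 : ℝ) ≤ _)]
  rw [stairSystem, ramp_of_ge (stairStep_nonneg hab) hle, stairStep, ← add_div]
  ring_nf

lemma stairSystem_nonneg (ha : 0 ≤ a) (q : ℝ) (i : Fin n) : 0 ≤ stairSystem n a b q i :=
  add_nonneg (div_nonneg ha n.cast_nonneg) (ramp_nonneg _ _ _)

lemma monotone_stairSystem (hab : a ≤ b) (q : ℝ) : Monotone (stairSystem n a b q) :=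
  fun _ _ hij => add_le_add_right (ramp_le_ramp_of_le (antitone_stairStart hab hij) _ _) _

lemma sum_stairSystem (hn : 0 < n) {q : ℝ} (hq : q ∈ Icc a b) :
    ∑ i, stairSystem n a b q i = q := by
  have hramp (i : Fin n) : ramp (stairStart n a b i) (stairStep n a b) q =
      min q (b - (i : ℕ) * stairStep n a b) -
        min q (b - ((i : ℕ) + 1 : ℕ) * stairStep n a b) := by
    rw [ramp_eq_min_sub_min (stairStep_nonneg (hq.1.trans hq.2)), stairStart_add_stairStep,
      stairStart, Nat.cast_succ]
  simp only [stairSystem, Finset.sum_add_distrib, hramp, Finset.sum_const, Finset.card_univ,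
    Fintype.card_fin, nsmul_eq_mul]
  rw [Fin.sum_univ_eq_sum_range
      (fun k => min q (b - k * stairStep n a b) - min q (b - (k + 1 : ℕ) * stairStep n a b)),
    Finset.sum_range_sub' (fun k => min q (b - k * stairStep n a b)), natCast_mul_stairStep hn,
    Nat.cast_zero, zero_mul, sub_zero, min_eq_left hq.2, sub_sub_cancel, min_eq_right hq.1,
    mul_div_cancel₀ _ (Nat.cast_ne_zero.2 hn.ne')]
  ring

lemma not_differentiableAt_stairSystem (hn : 0 < n) (hab : a < b) {q : ℝ}
    (hq : q ∈ stairKinks n a b) : ¬DifferentiableAt ℝ (stairSystem n a b) q := fun hd => by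
  obtain ⟨i, rfl⟩ | ⟨i, rfl⟩ := hq
  all_goals
    exact not_differentiableAt_ramp (stairStep_pos hn hab) (by simp)
      ((differentiableAt_const_add_iff _).1 (differentiableAt_pi.1 hd i))

lemma eventually_hasDerivAt_stairSystem (hab : a ≤ b) {q : ℝ} (hq : q ∉ stairKinks n a b) :
    ∃ v, ∀ᶠ x in 𝓝 q, HasDerivAt (stairSystem n a b) v x := by
  choose v hv using fun i => eventually_hasDerivAt_ramp (stairStep_nonneg hab)
    (fun h => hq (.inl ⟨i, h.symm⟩)) (fun h => hq (.inr ⟨i, h.symm⟩))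
  exact ⟨v, (eventually_all.2 hv).mono fun x hx => hasDerivAt_pi.2 fun i => (hx i).const_add _⟩

lemma differentiableAt_stairSystem_iff (hn : 0 < n) (hab : a < b) {q : ℝ} :
    DifferentiableAt ℝ (stairSystem n a b) q ↔ q ∉ stairKinks n a b := by
  refine ⟨fun hd hq => not_differentiableAt_stairSystem hn hab hq hd, fun hq => ?_⟩
  obtain ⟨v, hv⟩ := eventually_hasDerivAt_stairSystem hab.le hq
  exact hv.self_of_nhds.differentiableAt

lemma contPiecewiseLinearOn_stairSystem (hn : 0 < n) (hab : a < b) :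
    ContPiecewiseLinearOn n (Icc a b) (stairSystem n a b) := by
  have hsub : NonDiffSet n (Icc a b) (stairSystem n a b) ⊆ {a, b} ∪ stairKinks n a b := by
    rintro q ⟨-, hfr | hnd⟩
    · exact .inl (frontier_Icc hab.le ▸ hfr)
    · exact .inr (not_not.1 (mt (differentiableAt_stairSystem_iff hn hab).2 hnd))
  have hfin : ({a, b} ∪ stairKinks n a b).Finite :=
    (toFinite _).union ((finite_range _).union (finite_range _))
  refine ⟨(continuous_stairSystem n a b).continuousOn,
    .of_finite (hfin.subset hsub) (sep_subset _ _), fun q ⟨hqI, hqD⟩ => ?_⟩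
  have hdiff : DifferentiableAt ℝ (stairSystem n a b) q :=
    by_contra fun h => hqD ⟨hqI, .inr h⟩
  obtain ⟨v, hv⟩ :=
    eventually_hasDerivAt_stairSystem hab.le ((differentiableAt_stairSystem_iff hn hab).1 hdiff)
  obtain ⟨ε, hε, hball⟩ := Metric.eventually_nhds_iff_ball.1 (hv.mono fun _ hx => hx.deriv)
  refine ⟨ε, hε, fun x ⟨_, hx⟩ => ?_⟩
  rw [← Real.ball_eq_Ioo] at hx
  rw [hball x hx, hball q (Metric.mem_ball_self hε)]

lemma exists_moving_coord_stairSystem (hn : 0 < n) (hab : a < b) {a' b' : ℝ} (hab' : a' < b')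
    (hsub : Ioo a' b' ⊆ Icc a b)
    (hdiff : ∀ q ∈ Ioo a' b', DifferentiableAt ℝ (stairSystem n a b) q) :
    ∃ r : Fin n, (∀ q ∈ Ioo a' b', deriv (fun x => stairSystem n a b x r) q = 1) ∧
      ∀ j : Fin n, j ≠ r → ∀ p ∈ Ioo a' b', ∀ q ∈ Ioo a' b',
        stairSystem n a b p j = stairSystem n a b q j := by
  have hkink (i : Fin n) {x : ℝ} (hx : x = stairStart n a b i ∨
      x = stairStart n a b i + stairStep n a b) : x ∉ Ioo a' b' := fun hmem =>
    not_differentiableAt_stairSystem hn hab (by rcases hx with rfl | rfl <;> simp [stairKinks])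
      (hdiff x hmem)
  have hsplit (i : Fin n) := ramp_const_or_subset_Ioo (stairStep_nonneg hab.le) ordConnected_Ioo
    (hkink i (.inl rfl)) (hkink i (.inr rfl))
  obtain ⟨p, hp⟩ := nonempty_Ioo.2 hab'
  obtain ⟨r, hr⟩ :
      ∃ r, Ioo a' b' ⊆ Ioo (stairStart n a b r) (stairStart n a b r + stairStep n a b) := by
    -- Otherwise every coordinate, hence also their sum `q`, would be constant on the interval.
    by_contra! hnone
    obtain ⟨q, hpq, hqb⟩ := exists_between hp.2
    have hq : q ∈ Ioo a' b' := ⟨hp.1.trans hpq, hqb⟩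
    have hsum := (sum_stairSystem hn (hsub hp)).symm.trans <|
      (Finset.sum_congr rfl fun i _ => by
        rw [stairSystem, stairSystem, (hsplit i).resolve_right (hnone i) p hp q hq]).trans
      (sum_stairSystem hn (hsub hq))
    exact hpq.ne hsum
  refine ⟨r, fun q hq => ((hasDerivAt_ramp_of_mem (hr hq)).const_add _).deriv,
    fun j hj x hx y hy => ?_⟩
  have hconst := (hsplit j).resolve_right fun hj' =>
    disjoint_left.1 (disjoint_stair_ramps hab.le hj) (hj' hp) (hr hp)
  rw [stairSystem, stairSystem, hconst x hx y hy]

lemma le_of_derivWithin_stairSystem (hab : a ≤ b) {q : ℝ} {r s : Fin n}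
    (hr : derivWithin (fun x => stairSystem n a b x r) (Iic q) q = 1)
    (hs : derivWithin (fun x => stairSystem n a b x s) (Ici q) q = 1) : s ≤ r := by
  have hh := stairStep_nonneg (n := n) hab
  have hrq : stairStart n a b r < q := by
    by_contra! hqr
    refine one_ne_zero (hr.symm.trans (derivWithin_eq_zero_of_eqOn_const (C := a / n)
      (fun x hx => ?_) self_mem_Iic))
    rw [stairSystem, ramp_of_le hh (le_trans hx hqr), add_zero]
  have hqs : q < stairStart n a b s + stairStep n a b := by
    by_contra! hsq
    refine one_ne_zero (hs.symm.trans (derivWithin_eq_zero_of_eqOn_const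
      (C := a / n + stairStep n a b) (fun x hx => ?_) self_mem_Ici))
    rw [stairSystem, ramp_of_ge hh (le_trans hsq hx)]
  by_contra! hrs
  linarith [stairStart_add_stairStep_le_of_lt hab hrs]

end StairSystem

/-- Lemma 4.2: for `0 ≤ a < b` there is an `n`-system `P` on `[a,b]` with
`P(a) = (a/n,…,a/n)` and `P(b) = (b/n,…,b/n)`. -/
theorem exists_nsystem_diagonal_endpoints (n : ℕ) (hn : 2 ≤ n)
    (a b : ℝ) (ha : 0 ≤ a) (hab : a < b) :
    ∃ P : ℝ → Fin n → ℝ, IsNSystem n (Set.Icc a b) P ∧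
      (∀ i : Fin n, P a i = a / n) ∧ (∀ i : Fin n, P b i = b / n) := by
  have hn0 : 0 < n := by omega
  refine ⟨stairSystem n a b, ⟨contPiecewiseLinearOn_stairSystem hn0 hab, ?S1, ?S2, ?S3⟩,
    stairSystem_left hn0 hab.le, stairSystem_right hab.le⟩
  case S1 =>
    exact fun q hq => ⟨⟨stairSystem_nonneg ha q, monotone_stairSystem hab.le q⟩,
      sum_stairSystem hn0 hq⟩
  case S2 =>
    exact fun a' b' hab' hsub hdiff => exists_moving_coord_stairSystem hn0 hab hab' hsub hdiff
  case S3 =>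
    exact fun q _ _ r s hr hs hrs => absurd (le_of_derivWithin_stairSystem hab.le hr hs) hrs.not_ge
end
end

section
/- Let n ≥ 2 be an integer and let a, b, c ∈ ℝ with 0 ≤ a < b < c. Suppose that P⁽¹⁾: [a, b] → ℝ^n and P⁽²⁾: [b, c] → ℝ^n are n-systems with P⁽¹⁾(b) = P⁽²⁾(b) = (b/n, …, b/n). Then there is an n-system P on [a, c] which restricts to P⁽¹⁾ on [a, b] and to P⁽²⁾ on [b, c]. -/
noncomputable section

/-!
Take `P = P₁` on `[a, b]` and `P = P₂` on `[b, c]`. Away from `b` all the conditions are local,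
so they are inherited from `P₁` or `P₂`. Near `b` a continuous piecewise linear map has a constant
derivative on each side; when `P` is differentiable at `b` both one-sided slopes equal `P'(b)`.
Hence an interval of differentiability through `b` has a single moving coordinate, which gives
(S2), and (S3) holds at `b` because all coordinates of `P(b)` are equal.
-/

open Set Filter Topology

section OneSided

variable {E : Type*} [NormedAddCommGroup E] [NormedSpace ℝ E] {f : ℝ → E} {x : ℝ} {v : E}

theorem DifferentiableAt.deriv_eq_of_eventually_hasDerivAt_left (hf : DifferentiableAt ℝ f x)
    (h : ∀ᶠ y in 𝓝[<] x, HasDerivAt f v y) : deriv f x = v := by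
  have hlim : Tendsto (deriv f) (𝓝[<] x) (𝓝 v) :=
    tendsto_const_nhds.congr' (h.mono fun _ hy => hy.deriv.symm)
  have hleft := hasDerivWithinAt_Iic_of_tendsto_deriv (s := {y | HasDerivAt f v y})
    (fun _ hy => hy.differentiableAt.differentiableWithinAt) hf.continuousAt.continuousWithinAt
    h hlim
  rw [← hf.derivWithin (uniqueDiffWithinAt_Iic x)]
  exact hleft.derivWithin (uniqueDiffWithinAt_Iic x)

theorem DifferentiableAt.deriv_eq_of_eventually_hasDerivAt_right (hf : DifferentiableAt ℝ f x)
    (h : ∀ᶠ y in 𝓝[>] x, HasDerivAt f v y) : deriv f x = v := by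
  have hlim : Tendsto (deriv f) (𝓝[>] x) (𝓝 v) :=
    tendsto_const_nhds.congr' (h.mono fun _ hy => hy.deriv.symm)
  have hright := hasDerivWithinAt_Ici_of_tendsto_deriv (s := {y | HasDerivAt f v y})
    (fun _ hy => hy.differentiableAt.differentiableWithinAt) hf.continuousAt.continuousWithinAt
    h hlim
  rw [← hf.derivWithin (uniqueDiffWithinAt_Ici x)]
  exact hright.derivWithin (uniqueDiffWithinAt_Ici x)

theorem DifferentiableAt.eventually_deriv_eq_of_hasDerivAt_left_right {w : E}
    (hf : DifferentiableAt ℝ f x) (hl : ∀ᶠ y in 𝓝[<] x, HasDerivAt f v y)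
    (hr : ∀ᶠ y in 𝓝[>] x, HasDerivAt f w y) : ∀ᶠ y in 𝓝 x, deriv f y = deriv f x := by
  have hv := hf.deriv_eq_of_eventually_hasDerivAt_left hl
  have hw := hf.deriv_eq_of_eventually_hasDerivAt_right hr
  rw [← nhdsNE_sup_pure, ← nhdsLT_sup_nhdsGT, eventually_sup, eventually_sup, eventually_pure]
  exact ⟨⟨hl.mono fun y hy => hy.deriv.trans hv.symm, hr.mono fun y hy => hy.deriv.trans hw.symm⟩,
    rfl⟩

theorem deriv_eq_on_Ioo_of_split {a b c : ℝ} {w : E} (hab : a < b) (hbc : b < c)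
    (hf : ∀ y ∈ Ioo a c, DifferentiableAt ℝ f y) (hl : ∀ y ∈ Ioo a b, deriv f y = v)
    (hr : ∀ y ∈ Ioo b c, deriv f y = w) : ∀ y ∈ Ioo a c, deriv f y = v := by
  have hfb := hf b ⟨hab, hbc⟩
  have hv : deriv f b = v := hfb.deriv_eq_of_eventually_hasDerivAt_left <|
    mem_of_superset (Ioo_mem_nhdsLT hab) fun y hy =>
      hl y hy ▸ (hf y ⟨hy.1, hy.2.trans hbc⟩).hasDerivAt
  have hw : deriv f b = w := hfb.deriv_eq_of_eventually_hasDerivAt_right <|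
    mem_of_superset (Ioo_mem_nhdsGT hbc) fun y hy =>
      hr y hy ▸ (hf y ⟨hab.trans hy.1, hy.2⟩).hasDerivAt
  intro y hy
  rcases lt_trichotomy y b with hyb | rfl | hby
  · exact hl y ⟨hy.1, hyb⟩
  · exact hv
  · rw [hr y ⟨hby, hy.2⟩, ← hw, hv]

end OneSided

section Discrete

variable {D D' I J : Set ℝ}

theorem discreteIn_iff : DiscreteIn D I ↔ D ⊆ I ∧ ∀ q ∈ I, ∀ᶠ x in 𝓝[≠] q, x ∉ D := by
  refine and_congr_right fun _ => forall₂_congr fun q _ => ?_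
  simp only [eventually_nhdsWithin_iff, Metric.eventually_nhds_iff_ball, Real.ball_eq_Ioo,
    subset_def, mem_inter_iff, mem_singleton_iff, mem_compl_iff]
  exact exists_congr fun ε => and_congr_right fun _ =>
    forall_congr' fun _ => by tauto

theorem DiscreteIn.mono (h : DiscreteIn D' I) (hD : D ⊆ D') : DiscreteIn D I :=
  ⟨hD.trans h.1, fun q hq => let ⟨ε, hε, hq⟩ := h.2 q hq; ⟨ε, hε, fun _ hx => hq ⟨hD hx.1, hx.2⟩⟩⟩

theorem DiscreteIn.union (hD : DiscreteIn D I) (hD' : DiscreteIn D' J) (hI : IsClosed I)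
    (hJ : IsClosed J) : DiscreteIn (D ∪ D') (I ∪ J) := by
  rw [discreteIn_iff] at *
  refine ⟨union_subset_union hD.1 hD'.1, fun q _ => ?_⟩
  have avoid : ∀ {D K : Set ℝ}, D ⊆ K → IsClosed K → (∀ q ∈ K, ∀ᶠ x in 𝓝[≠] q, x ∉ D) →
      ∀ᶠ x in 𝓝[≠] q, x ∉ D := fun {D K} hDK hK h => by
    by_cases hqK : q ∈ K
    · exact h q hqK
    · exact nhdsWithin_le_nhds <|
        Filter.mem_of_superset (hK.isOpen_compl.mem_nhds hqK) fun _ hx hxD => hx (hDK hxD)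
  filter_upwards [avoid hD.1 hI hD.2, avoid hD'.1 hJ hD'.2] with x h h' using not_or.2 ⟨h, h'⟩

end Discrete

section PiecewiseLinear

variable {n : ℕ} {I : Set ℝ} {P Q : ℝ → Fin n → ℝ} {q : ℝ}

theorem notMem_nonDiffSet_iff (hq : q ∈ I) :
    q ∉ NonDiffSet n I P ↔ q ∈ interior I ∧ DifferentiableAt ℝ P q := by
  have hfr : q ∉ frontier I ↔ q ∈ interior I := by
    rw [frontier, Set.mem_sdiff, not_and_not_right]
    exact ⟨fun h => h (subset_closure hq), fun h _ => h⟩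
  simp only [NonDiffSet, mem_ofPred_eq, hq, true_and, not_or, hfr, not_not]

theorem contPiecewiseLinearOn_iff :
    ContPiecewiseLinearOn n I P ↔ ContinuousOn P I ∧ DiscreteIn (NonDiffSet n I P) I ∧
      ∀ q ∈ I \ NonDiffSet n I P, ∀ᶠ x in 𝓝 q, deriv P x = deriv P q := by
  refine and_congr_right fun _ => and_congr_right fun hD => forall₂_congr fun q hq => ?_
  constructor
  · rintro ⟨ε, hε, h⟩
    have hI : I ∈ 𝓝 q := mem_interior_iff_mem_nhds.1 ((notMem_nonDiffSet_iff hq.1).1 hq.2).1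
    filter_upwards [hI, eventually_nhdsWithin_iff.1 ((discreteIn_iff.1 hD).2 q hq.1),
      Ioo_mem_nhds (sub_lt_self q hε) (lt_add_of_pos_right q hε)] with x hxI hxD hxε
    rcases eq_or_ne x q with rfl | hxq
    · rfl
    · exact h x ⟨⟨hxI, hxD hxq⟩, hxε⟩
  · intro h
    obtain ⟨ε, hε, hball⟩ := Metric.eventually_nhds_iff_ball.1 h
    exact ⟨ε, hε, fun x hx => hball x (by rw [Real.ball_eq_Ioo]; exact hx.2)⟩

theorem ContPiecewiseLinearOn.eventually_deriv_eq_of_eventuallyEq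
    (hP : ContPiecewiseLinearOn n I P) (hq : q ∈ interior I) (hQ : Q =ᶠ[𝓝 q] P)
    (hd : DifferentiableAt ℝ Q q) : ∀ᶠ x in 𝓝 q, deriv Q x = deriv Q q := by
  have hqP : q ∈ I \ NonDiffSet n I P :=
    ⟨interior_subset hq, (notMem_nonDiffSet_iff (interior_subset hq)).2
      ⟨hq, hQ.differentiableAt_iff.1 hd⟩⟩
  filter_upwards [hQ.deriv, (contPiecewiseLinearOn_iff.1 hP).2.2 q hqP] with x hx hPx
  rw [hx, hPx, hQ.deriv_eq]

theorem ContPiecewiseLinearOn.exists_eventually_hasDerivAt_left {u w : ℝ}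
    (hP : ContPiecewiseLinearOn n (Icc u w) P) (huw : u < w) :
    ∃ v, ∀ᶠ x in 𝓝[<] w, HasDerivAt P v x := by
  obtain ⟨-, hD, hloc⟩ := contPiecewiseLinearOn_iff.1 hP
  have hgood : ∀ᶠ x in 𝓝[<] w, x ∈ Icc u w \ NonDiffSet n (Icc u w) P := by
    filter_upwards [Ioo_mem_nhdsLT huw, nhdsWithin_mono w (fun _ hx => ne_of_lt hx)
      ((discreteIn_iff.1 hD).2 w (right_mem_Icc.2 huw.le))] with x hx hxD
    exact ⟨Ioo_subset_Icc_self hx, hxD⟩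
  obtain ⟨l, hl, hsub⟩ := mem_nhdsLT_iff_exists_Ioo_subset.1 hgood
  have hm : (l + w) / 2 ∈ Ioo l w := ⟨by linarith [mem_Iio.1 hl], by linarith [mem_Iio.1 hl]⟩
  refine ⟨deriv P ((l + w) / 2), mem_of_superset (Ioo_mem_nhdsLT hl) fun x hx => ?_⟩
  rw [← eq_of_germ_isConstant_on (fun y hy => ⟨_, hloc y (hsub hy)⟩) isPreconnected_Ioo hx hm]
  exact ((notMem_nonDiffSet_iff (hsub hx).1).1 (hsub hx).2).2.hasDerivAt

theorem ContPiecewiseLinearOn.exists_eventually_hasDerivAt_right {u w : ℝ}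
    (hP : ContPiecewiseLinearOn n (Icc u w) P) (huw : u < w) :
    ∃ v, ∀ᶠ x in 𝓝[>] u, HasDerivAt P v x := by
  obtain ⟨-, hD, hloc⟩ := contPiecewiseLinearOn_iff.1 hP
  have hgood : ∀ᶠ x in 𝓝[>] u, x ∈ Icc u w \ NonDiffSet n (Icc u w) P := by
    filter_upwards [Ioo_mem_nhdsGT huw, nhdsWithin_mono u (fun _ hx => ne_of_gt hx)
      ((discreteIn_iff.1 hD).2 u (left_mem_Icc.2 huw.le))] with x hx hxD
    exact ⟨Ioo_subset_Icc_self hx, hxD⟩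
  obtain ⟨l, hl, hsub⟩ := mem_nhdsGT_iff_exists_Ioo_subset.1 hgood
  have hm : (u + l) / 2 ∈ Ioo u l := ⟨by linarith [mem_Ioi.1 hl], by linarith [mem_Ioi.1 hl]⟩
  refine ⟨deriv P ((u + l) / 2), mem_of_superset (Ioo_mem_nhdsGT hl) fun x hx => ?_⟩
  rw [← eq_of_germ_isConstant_on (fun y hy => ⟨_, hloc y (hsub hy)⟩) isPreconnected_Ioo hx hm]
  exact ((notMem_nonDiffSet_iff (hsub hx).1).1 (hsub hx).2).2.hasDerivAt

end PiecewiseLinear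

section NSystem

variable {n : ℕ} {I : Set ℝ} {P Q : ℝ → Fin n → ℝ} {q : ℝ}

/-- Condition (S3) of `IsNSystem` at the point `q`. -/
def SwitchConditionAt (n : ℕ) (P : ℝ → Fin n → ℝ) (q : ℝ) : Prop :=
  ¬DifferentiableAt ℝ P q → ∀ r s : Fin n, derivWithin (fun x => P x r) (Iic q) q = 1 →
    derivWithin (fun x => P x s) (Ici q) q = 1 → r < s → ∀ i : Fin n, r ≤ i → i ≤ s →
      P q i = P q r

theorem SwitchConditionAt.congr (hP : SwitchConditionAt n P q) (hQ : Q =ᶠ[𝓝 q] P) :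
    SwitchConditionAt n Q q := by
  intro hnd r s hr hs hrs i hri his
  have hcoord : ∀ j, (fun x => Q x j) =ᶠ[𝓝 q] fun x => P x j :=
    fun j => hQ.mono fun _ h => congrFun h j
  rw [(hcoord r).derivWithin_eq_of_nhds] at hr
  rw [(hcoord s).derivWithin_eq_of_nhds] at hs
  rw [hQ.eq_of_nhds]
  exact hP (fun h => hnd (hQ.differentiableAt_iff.2 h)) r s hr hs hrs i hri his

theorem switchConditionAt_of_forall_eq (h : ∀ i j, P q i = P q j) : SwitchConditionAt n P q :=
  fun _ _ _ _ _ _ i _ _ => h i _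

theorem IsNSystem.exists_deriv_eq_single (hP : IsNSystem n I P) {a b : ℝ} (hab : a < b)
    (hsub : Ioo a b ⊆ I) (hQ : EqOn Q P (Ioo a b)) (hd : ∀ q ∈ Ioo a b, DifferentiableAt ℝ Q q) :
    ∃ r, ∀ q ∈ Ioo a b, deriv Q q = Pi.single r 1 := by
  have hQP : ∀ q ∈ Ioo a b, Q =ᶠ[𝓝 q] P :=
    fun q hq => hQ.eventuallyEq_of_mem (isOpen_Ioo.mem_nhds hq)
  have hdP : ∀ q ∈ Ioo a b, DifferentiableAt ℝ P q :=
    fun q hq => (hQP q hq).differentiableAt_iff.1 (hd q hq)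
  obtain ⟨r, hr, hconst⟩ := hP.2.2.1 a b hab hsub hdP
  refine ⟨r, fun q hq => ?_⟩
  rw [(hQP q hq).deriv_eq, deriv_pi fun j => differentiableAt_pi.1 (hdP q hq) j]
  funext j
  rcases eq_or_ne j r with rfl | hjr
  · rw [hr q hq, Pi.single_eq_same]
  · rw [Pi.single_eq_of_ne hjr]
    refine (hasDerivAt_const q (P q j)).congr_of_eventuallyEq ?_ |>.deriv
    exact mem_of_superset (isOpen_Ioo.mem_nhds hq) fun p hp => hconst j hjr p hp q hq

theorem slope_condition_of_deriv_eq_single {a b : ℝ} {r : Fin n}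
    (hd : ∀ q ∈ Ioo a b, DifferentiableAt ℝ P q) (h : ∀ q ∈ Ioo a b, deriv P q = Pi.single r 1) :
    (∀ q ∈ Ioo a b, deriv (fun x => P x r) q = 1) ∧
      ∀ j : Fin n, j ≠ r → ∀ p ∈ Ioo a b, ∀ q ∈ Ioo a b, P p j = P q j := by
  have hcoord : ∀ j, ∀ q ∈ Ioo a b, deriv (fun x => P x j) q = (Pi.single r 1 : Fin n → ℝ) j :=
    fun j q hq => by rw [← h q hq, deriv_pi fun i => differentiableAt_pi.1 (hd q hq) i]
  refine ⟨fun q hq => by rw [hcoord r q hq, Pi.single_eq_same], fun j hjr p hp q hq => ?_⟩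
  refine isOpen_Ioo.is_const_of_deriv_eq_zero isPreconnected_Ioo
    (fun x hx => (differentiableAt_pi.1 (hd x hx) j).differentiableWithinAt) (fun x hx => ?_) hp hq
  rw [hcoord j x hx, Pi.single_eq_of_ne hjr, Pi.zero_apply]

end NSystem

section Paste

variable {α : Type*} {b q : ℝ} {P₁ P₂ : ℝ → α}

def paste (b : ℝ) (P₁ P₂ : ℝ → α) (q : ℝ) : α :=
  if q ≤ b then P₁ q else P₂ q

theorem paste_of_le (hq : q ≤ b) : paste b P₁ P₂ q = P₁ q :=
  if_pos hq

theorem paste_of_ge (hb : P₁ b = P₂ b) (hq : b ≤ q) : paste b P₁ P₂ q = P₂ q := by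
  rcases hq.eq_or_lt with rfl | hq
  · rw [paste_of_le le_rfl, hb]
  · exact if_neg hq.not_ge

theorem paste_eventuallyEq_left (hq : q < b) : paste b P₁ P₂ =ᶠ[𝓝 q] P₁ :=
  mem_of_superset (Iic_mem_nhds hq) fun _ hx => paste_of_le hx

theorem paste_eventuallyEq_right (hb : P₁ b = P₂ b) (hq : b < q) : paste b P₁ P₂ =ᶠ[𝓝 q] P₂ :=
  mem_of_superset (Ici_mem_nhds hq) fun _ hx => paste_of_ge hb hx

theorem ContinuousOn.paste [TopologicalSpace α] {a c : ℝ} (h₁ : ContinuousOn P₁ (Icc a b))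
    (h₂ : ContinuousOn P₂ (Icc b c)) (hb : P₁ b = P₂ b) (hab : a ≤ b) (hbc : b ≤ c) :
    ContinuousOn (paste b P₁ P₂) (Icc a c) := by
  rw [← Icc_union_Icc_eq_Icc hab hbc]
  exact (h₁.congr fun _ hx => paste_of_le hx.2).union_of_isClosed
    (h₂.congr fun _ hx => paste_of_ge hb hx.1) isClosed_Icc isClosed_Icc

end Paste

section PasteNSystem

variable {n : ℕ} {a b c : ℝ} {P₁ P₂ : ℝ → Fin n → ℝ}

theorem nonDiffSet_paste_subset (hab : a < b) (hbc : b < c) (hb : P₁ b = P₂ b) :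
    NonDiffSet n (Icc a c) (paste b P₁ P₂) ⊆
      NonDiffSet n (Icc a b) P₁ ∪ NonDiffSet n (Icc b c) P₂ := by
  intro x hxD
  by_contra hx
  rw [mem_union, not_or] at hx
  refine (notMem_nonDiffSet_iff hxD.1).2 ?_ hxD
  rw [interior_Icc]
  rcases le_total x b with hxb | hbx
  · obtain ⟨hint, hd⟩ := (notMem_nonDiffSet_iff (show x ∈ Icc a b from ⟨hxD.1.1, hxb⟩)).1 hx.1
    rw [interior_Icc] at hint
    exact ⟨⟨hint.1, hint.2.trans hbc⟩, (paste_eventuallyEq_left hint.2).differentiableAt_iff.2 hd⟩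
  · obtain ⟨hint, hd⟩ := (notMem_nonDiffSet_iff (show x ∈ Icc b c from ⟨hbx, hxD.1.2⟩)).1 hx.2
    rw [interior_Icc] at hint
    exact ⟨⟨hab.trans hint.1, hint.2⟩,
      (paste_eventuallyEq_right hb hint.1).differentiableAt_iff.2 hd⟩

theorem ContPiecewiseLinearOn.paste (h₁ : ContPiecewiseLinearOn n (Icc a b) P₁)
    (h₂ : ContPiecewiseLinearOn n (Icc b c) P₂) (hab : a < b) (hbc : b < c) (hb : P₁ b = P₂ b) :
    ContPiecewiseLinearOn n (Icc a c) (paste b P₁ P₂) := by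
  have hD := h₁.2.1.union h₂.2.1 isClosed_Icc isClosed_Icc
  rw [Icc_union_Icc_eq_Icc hab.le hbc.le] at hD
  refine contPiecewiseLinearOn_iff.2 ⟨h₁.1.paste h₂.1 hb hab.le hbc.le,
    hD.mono (nonDiffSet_paste_subset hab hbc hb), fun q hq => ?_⟩
  obtain ⟨hint, hd⟩ := (notMem_nonDiffSet_iff hq.1).1 hq.2
  rw [interior_Icc] at hint
  rcases lt_trichotomy q b with hqb | rfl | hbq
  · exact h₁.eventually_deriv_eq_of_eventuallyEq (by rw [interior_Icc]; exact ⟨hint.1, hqb⟩)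
      (paste_eventuallyEq_left hqb) hd
  · obtain ⟨v₁, hv₁⟩ := h₁.exists_eventually_hasDerivAt_left hab
    obtain ⟨v₂, hv₂⟩ := h₂.exists_eventually_hasDerivAt_right hbc
    refine hd.eventually_deriv_eq_of_hasDerivAt_left_right (v := v₁) (w := v₂) ?_ ?_
    · filter_upwards [hv₁, self_mem_nhdsWithin] with x hx hxq
      exact hx.congr_of_eventuallyEq (paste_eventuallyEq_left hxq)
    · filter_upwards [hv₂, self_mem_nhdsWithin] with x hx hxq
      exact hx.congr_of_eventuallyEq (paste_eventuallyEq_right hb hxq)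
  · exact h₂.eventually_deriv_eq_of_eventuallyEq (by rw [interior_Icc]; exact ⟨hbq, hint.2⟩)
      (paste_eventuallyEq_right hb hbq) hd

theorem IsNSystem.exists_deriv_paste_eq_single (hP₁ : IsNSystem n (Icc a b) P₁)
    (hP₂ : IsNSystem n (Icc b c) P₂) (hb : P₁ b = P₂ b) {a' b' : ℝ} (hab' : a' < b')
    (hsub : Ioo a' b' ⊆ Icc a c) (hd : ∀ q ∈ Ioo a' b', DifferentiableAt ℝ (paste b P₁ P₂) q) :
    ∃ r, ∀ q ∈ Ioo a' b', deriv (paste b P₁ P₂) q = Pi.single r 1 := by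
  have left : ∀ u, a' < u → u ≤ b' → u ≤ b →
      ∃ r, ∀ q ∈ Ioo a' u, deriv (paste b P₁ P₂) q = Pi.single r 1 := fun u hu hub' hub =>
    hP₁.exists_deriv_eq_single hu (fun x hx => ⟨(hsub ⟨hx.1, hx.2.trans_le hub'⟩).1, by
      linarith [hx.2]⟩) (fun x hx => paste_of_le (by linarith [hx.2]))
      (fun x hx => hd x ⟨hx.1, hx.2.trans_le hub'⟩)
  have right : ∀ u, u < b' → a' ≤ u → b ≤ u →
      ∃ r, ∀ q ∈ Ioo u b', deriv (paste b P₁ P₂) q = Pi.single r 1 := fun u hu ha'u hbu =>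
    hP₂.exists_deriv_eq_single hu (fun x hx => ⟨by linarith [hx.1],
      (hsub ⟨ha'u.trans_lt hx.1, hx.2⟩).2⟩) (fun x hx => paste_of_ge hb (by linarith [hx.1]))
      (fun x hx => hd x ⟨ha'u.trans_lt hx.1, hx.2⟩)
  rcases le_or_gt b' b with hb'b | hbb'
  · exact left b' hab' le_rfl hb'b
  rcases le_or_gt b a' with hba' | ha'b
  · exact right a' hab' le_rfl hba'
  obtain ⟨r₁, hr₁⟩ := left b ha'b hbb'.le le_rfl
  obtain ⟨r₂, hr₂⟩ := right b hbb' ha'b.le le_rfl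
  exact ⟨r₁, deriv_eq_on_Ioo_of_split ha'b hbb' hd hr₁ hr₂⟩

theorem IsNSystem.paste (hP₁ : IsNSystem n (Icc a b) P₁) (hP₂ : IsNSystem n (Icc b c) P₂)
    (hab : a < b) (hbc : b < c) (hb : P₁ b = P₂ b) (hcoord : ∀ i j, P₁ b i = P₁ b j) :
    IsNSystem n (Icc a c) (paste b P₁ P₂) := by
  refine ⟨hP₁.1.paste hP₂.1 hab hbc hb, fun q hq => ?_, fun a' b' hab' hsub hd => ?_,
    fun q hq => ?_⟩
  · rcases le_total q b with hqb | hbq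
    · rw [paste_of_le hqb]; exact hP₁.2.1 q ⟨hq.1, hqb⟩
    · rw [paste_of_ge hb hbq]; exact hP₂.2.1 q ⟨hbq, hq.2⟩
  · obtain ⟨r, hr⟩ := hP₁.exists_deriv_paste_eq_single hP₂ hb hab' hsub hd
    exact ⟨r, slope_condition_of_deriv_eq_single hd hr⟩
  · rw [interior_Icc] at hq
    rcases lt_trichotomy q b with hqb | rfl | hbq
    · exact SwitchConditionAt.congr (hP₁.2.2.2 q (by rw [interior_Icc]; exact ⟨hq.1, hqb⟩))
        (paste_eventuallyEq_left hqb)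
    · exact switchConditionAt_of_forall_eq fun i j => by simp only [paste_of_le le_rfl, hcoord i j]
    · exact SwitchConditionAt.congr (hP₂.2.2.2 q (by rw [interior_Icc]; exact ⟨hbq, hq.2⟩))
        (paste_eventuallyEq_right hb hbq)

end PasteNSystem

theorem nsystem_pasting_general (n : ℕ) (a b c : ℝ)
    (hab : a < b) (hbc : b < c)
    (P₁ P₂ : ℝ → Fin n → ℝ)
    (hP₁ : IsNSystem n (Set.Icc a b) P₁) (hP₂ : IsNSystem n (Set.Icc b c) P₂)
    (hval₁ : ∀ i : Fin n, P₁ b i = b / n) (hval₂ : ∀ i : Fin n, P₂ b i = b / n) :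
    ∃ P : ℝ → Fin n → ℝ, IsNSystem n (Set.Icc a c) P ∧
      (∀ q ∈ Set.Icc a b, ∀ i : Fin n, P q i = P₁ q i) ∧
      (∀ q ∈ Set.Icc b c, ∀ i : Fin n, P q i = P₂ q i) := by
  have hb : P₁ b = P₂ b := funext fun i => (hval₁ i).trans (hval₂ i).symm
  exact ⟨paste b P₁ P₂, hP₁.paste hP₂ hab hbc hb fun i j => by rw [hval₁, hval₁],
    fun q hq i => by rw [paste_of_le hq.2], fun q hq i => by rw [paste_of_ge hb hq.1]⟩

/-- Lemma 4.3: two `n`-systems on `[a,b]` and `[b,c]` taking the value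
`(b/n,…,b/n)` at `b` can be pasted into an `n`-system on `[a,c]`. -/
theorem nsystem_pasting (n : ℕ) (hn : 2 ≤ n) (a b c : ℝ)
    (ha : 0 ≤ a) (hab : a < b) (hbc : b < c)
    (P₁ P₂ : ℝ → Fin n → ℝ)
    (hP₁ : IsNSystem n (Set.Icc a b) P₁) (hP₂ : IsNSystem n (Set.Icc b c) P₂)
    (hval₁ : ∀ i : Fin n, P₁ b i = b / n) (hval₂ : ∀ i : Fin n, P₂ b i = b / n) :
    ∃ P : ℝ → Fin n → ℝ, IsNSystem n (Set.Icc a c) P ∧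
      (∀ q ∈ Set.Icc a b, ∀ i : Fin n, P q i = P₁ q i) ∧
      (∀ q ∈ Set.Icc b c, ∀ i : Fin n, P q i = P₂ q i) :=
  nsystem_pasting_general n a b c hab hbc P₁ P₂ hP₁ hP₂ hval₁ hval₂

end
end

section
/- Let 0 < a < b, let t ≥ 2 be an integer, let q₁ = a < q₂ < ⋯ < q_t = b be real numbers, and let M: [a, b] → ℝ be a continuous function which is affine with slope ρ_i on each interval [q_i, q_{i+1}] for i = 1, …, t−1. If ρ₁ > ρ₂ > ⋯ > ρ_{t−1} > M(b)/b, then the function q ↦ M(q)/q is strictly increasing on [a, b] and is bounded above by ρ₁ on [a, b]. -/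
/-!
On a piece where `M` is affine with slope `ρ`, `M x = ρ x + β` with a constant intercept `β`, so
`M x / x = ρ + β / x` is strictly increasing exactly when `β < 0`, i.e. when `M` lies below the
line `x ↦ ρ x` there. This holds on the last piece because `M b / b < ρ_{t-1}`, and it passes from
piece `i + 1` to piece `i`: at the common breakpoint `M (q_{i+1}) < ρ_{i+1} q_{i+1} < ρ_i q_{i+1}`.
Gluing the pieces gives monotonicity on `[a, b]`, and then `M x / x ≤ M b / b < ρ_{t-1} ≤ ρ_1`.
-/

open Set

def AffineWithSlopeOn (M : ℝ → ℝ) (ρ c d : ℝ) : Prop :=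
  ∀ x ∈ Icc c d, M x = M c + ρ * (x - c)

namespace AffineWithSlopeOn

variable {M : ℝ → ℝ} {ρ c d x y : ℝ}

theorem sub_mul_eq (h : AffineWithSlopeOn M ρ c d) (hx : x ∈ Icc c d) :
    M x - ρ * x = M c - ρ * c := by
  rw [h x hx]
  ring

theorem lt_mul_of_lt_mul (h : AffineWithSlopeOn M ρ c d) (hx : x ∈ Icc c d) (hy : y ∈ Icc c d)
    (hMy : M y < ρ * y) : M x < ρ * x := by
  linarith [h.sub_mul_eq hx, h.sub_mul_eq hy]

theorem strictMonoOn_div (h : AffineWithSlopeOn M ρ c d) (hc : 0 < c) (hMd : M d < ρ * d) :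
    StrictMonoOn (fun x => M x / x) (Icc c d) := by
  intro x hx y hy hxy
  have hx0 : 0 < x := hc.trans_le hx.1
  have hy0 : 0 < y := hc.trans_le hy.1
  set β := M c - ρ * c
  have hβ : β < 0 := by linarith [h.sub_mul_eq (right_mem_Icc.2 (hx.1.trans hx.2))]
  have hMx : M x = ρ * x + β := by linarith [h.sub_mul_eq hx]
  have hMy : M y = ρ * y + β := by linarith [h.sub_mul_eq hy]
  show M x / x < M y / y
  rw [div_lt_div_iff₀ hx0 hy0, hMx, hMy]
  nlinarith [mul_lt_mul_of_neg_left hxy hβ]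

end AffineWithSlopeOn

theorem strictMonoOn_Icc_of_forall_Icc_add_one {α β : Type*} [LinearOrder α] [Preorder β]
    {f : α → β} {q : ℕ → α} {m n : ℕ} (hmn : m ≤ n) (hq : MonotoneOn q (Icc m n))
    (hf : ∀ i ∈ Ico m n, StrictMonoOn f (Icc (q i) (q (i + 1)))) :
    StrictMonoOn f (Icc (q m) (q n)) := by
  induction n, hmn using Nat.le_induction with
  | base => simp
  | succ n hmn ih =>
    have hqn : q m ≤ q n := hq ⟨le_rfl, by omega⟩ ⟨hmn, by omega⟩ hmn
    have hqn' : q n ≤ q (n + 1) := hq ⟨hmn, by omega⟩ ⟨by omega, le_rfl⟩ (by omega)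
    rw [← Icc_union_Icc_eq_Icc hqn hqn']
    have hleft : StrictMonoOn f (Icc (q m) (q n)) :=
      ih (hq.mono (Icc_subset_Icc_right n.le_succ)) fun i hi => hf i (Ico_subset_Ico_right n.le_succ hi)
    exact hleft.union (hf n ⟨hmn, n.lt_succ_self⟩) (isGreatest_Icc hqn) (isLeast_Icc hqn')

theorem apply_lt_mul_of_strictAntiOn {M : ℝ → ℝ} {q ρ : ℕ → ℝ} {m N : ℕ}
    (hq : MonotoneOn q (Icc m (N + 1))) (hqm : 0 < q m) (hρ : StrictAntiOn ρ (Icc m N))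
    (haff : ∀ i ∈ Icc m N, AffineWithSlopeOn M (ρ i) (q i) (q (i + 1)))
    (hN : M (q (N + 1)) < ρ N * q (N + 1)) :
    ∀ i ∈ Icc m N, M (q (i + 1)) < ρ i * q (i + 1) := by
  intro i hi
  refine Nat.decreasingInduction' (P := fun k => M (q (k + 1)) < ρ k * q (k + 1))
    (fun k hkN hik hk => ?_) hi.2 hN
  have hmk : m ≤ k := hi.1.trans hik
  have hpos : 0 < q (k + 1) :=
    hqm.trans_le (hq ⟨le_rfl, by omega⟩ ⟨by omega, by omega⟩ (by omega))
  have hle : q (k + 1) ≤ q (k + 2) := hq ⟨by omega, by omega⟩ ⟨by omega, by omega⟩ (by omega)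
  calc M (q (k + 1)) < ρ (k + 1) * q (k + 1) :=
        (haff (k + 1) ⟨by omega, hkN⟩).lt_mul_of_lt_mul
          (left_mem_Icc.2 hle) (right_mem_Icc.2 hle) hk
    _ < ρ k * q (k + 1) :=
        mul_lt_mul_of_pos_right (hρ ⟨hmk, hkN.le⟩ ⟨by omega, hkN⟩ k.lt_succ_self) hpos

theorem ratio_strictMonoOn_of_decreasing_slopes_general
    (a b : ℝ) (ha : 0 < a) (hab : a < b)
    (t : ℕ) (ht : 2 ≤ t) (q : ℕ → ℝ) (ρ : ℕ → ℝ)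
    (hqa : q 1 = a) (hqb : q t = b)
    (hqmono : ∀ i : ℕ, 1 ≤ i → i ≤ t - 1 → q i < q (i + 1))
    (M : ℝ → ℝ)
    (haff : ∀ i : ℕ, 1 ≤ i → i ≤ t - 1 →
      ∀ x ∈ Set.Icc (q i) (q (i + 1)), M x = M (q i) + ρ i * (x - q i))
    (hslopes : ∀ i : ℕ, 1 ≤ i → i ≤ t - 2 → ρ (i + 1) < ρ i)
    (hlast : M b / b < ρ (t - 1)) :
    StrictMonoOn (fun x : ℝ => M x / x) (Set.Icc a b) ∧
      ∀ x ∈ Set.Icc a b, M x / x ≤ ρ 1 := by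
  obtain ⟨N, rfl⟩ : ∃ N, t = N + 1 := ⟨t - 1, by omega⟩
  simp only [Nat.add_sub_cancel] at hqmono haff hlast
  have hq : StrictMonoOn q (Icc 1 (N + 1)) :=
    strictMonoOn_of_lt_add_one ordConnected_Icc fun i _ hi hi' =>
      hqmono i hi.1 (Nat.le_of_succ_le_succ hi'.2)
  have hqpos : ∀ i ∈ Icc 1 (N + 1), 0 < q i := fun i hi =>
    ha.trans_le (hqa ▸ hq.monotoneOn ⟨le_rfl, by omega⟩ hi hi.1)
  have hρ : StrictAntiOn ρ (Icc 1 N) :=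
    strictAntiOn_of_add_one_lt ordConnected_Icc fun i _ hi hi' =>
      hslopes i hi.1 (Nat.le_sub_of_add_le (Nat.succ_le_succ hi'.2))
  have hpieces : ∀ i ∈ Icc 1 N, AffineWithSlopeOn M (ρ i) (q i) (q (i + 1)) :=
    fun i hi => haff i hi.1 hi.2
  have hend := apply_lt_mul_of_strictAntiOn hq.monotoneOn (hqa ▸ ha) hρ hpieces
    (by rwa [hqb, ← div_lt_iff₀ (ha.trans hab)])
  have hmono : StrictMonoOn (fun x => M x / x) (Icc a b) := by
    rw [← hqa, ← hqb]
    refine strictMonoOn_Icc_of_forall_Icc_add_one (by omega) hq.monotoneOn fun i hi => ?_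
    have hi' : i ∈ Icc 1 N := ⟨hi.1, Nat.lt_succ_iff.1 hi.2⟩
    exact (hpieces i hi').strictMonoOn_div (hqpos i ⟨hi.1, hi.2.le⟩) (hend i hi')
  refine ⟨hmono, fun x hx => ?_⟩
  calc M x / x ≤ M b / b := hmono.monotoneOn hx (right_mem_Icc.2 hab.le) hx.2
    _ ≤ ρ N := hlast.le
    _ ≤ ρ 1 := hρ.antitoneOn ⟨le_rfl, by omega⟩ ⟨by omega, le_rfl⟩ (by omega)

/-- Lemma 5.2(2): if `M : [a,b] → ℝ` is continuous and affine with slope `ρᵢ` on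
each `[qᵢ, qᵢ₊₁]` (where `q₁ = a < q₂ < ⋯ < q_t = b`), and
`ρ₁ > ⋯ > ρ_{t-1} > M(b)/b`, then `q ↦ M(q)/q` is strictly increasing on `[a,b]`
and bounded above there by `ρ₁`. -/
theorem ratio_strictMonoOn_of_decreasing_slopes
    (a b : ℝ) (ha : 0 < a) (hab : a < b)
    (t : ℕ) (ht : 2 ≤ t) (q : ℕ → ℝ) (ρ : ℕ → ℝ)
    (hqa : q 1 = a) (hqb : q t = b)
    (hqmono : ∀ i : ℕ, 1 ≤ i → i ≤ t - 1 → q i < q (i + 1))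
    (M : ℝ → ℝ) (hcont : ContinuousOn M (Set.Icc a b))
    (haff : ∀ i : ℕ, 1 ≤ i → i ≤ t - 1 →
      ∀ x ∈ Set.Icc (q i) (q (i + 1)), M x = M (q i) + ρ i * (x - q i))
    (hslopes : ∀ i : ℕ, 1 ≤ i → i ≤ t - 2 → ρ (i + 1) < ρ i)
    (hlast : M b / b < ρ (t - 1)) :
    StrictMonoOn (fun x : ℝ => M x / x) (Set.Icc a b) ∧
      ∀ x ∈ Set.Icc a b, M x / x ≤ ρ 1 :=
  ratio_strictMonoOn_of_decreasing_slopes_general a b ha hab t ht q ρ hqa hqb hqmono M haff hslopes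
    hlast
end

section
/- Let n ≥ 2 be an integer and let E be an arbitrary non-empty subset of Δ̄^(n). There exists a generalized n-system P on [1, ∞) such that, for each j = 1, …, n, liminf_{q→∞} ψ_j(q^{−1}P(q)) = inf ψ_j(E) and limsup_{q→∞} ψ_j(q^{−1}P(q)) = j/n. -/
noncomputable section

/-- `ψ_j(a) = a₁ + ⋯ + a_j` (sum of the first `j` coordinates). -/
def psiSum (m j : ℕ) (x : Fin m → ℝ) : ℝ := ∑ i : Fin m, if (i : ℕ) < j then x i else 0

/-- The closed simplex `Δ̄⁽ᵐ⁾ = {a : 0 ≤ a₁ ≤ ⋯ ≤ a_m, a₁ + ⋯ + a_m = 1}`. -/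
def DeltaBar (m : ℕ) : Set (Fin m → ℝ) :=
  {a | (∀ i, 0 ≤ a i) ∧ Monotone a ∧ ∑ i, a i = 1}

/-- The open simplex `Δ⁽ᵐ⁾ = {a : 0 < a₁ < ⋯ < a_m, a₁ + ⋯ + a_m = 1}`. -/
def DeltaStrict (m : ℕ) : Set (Fin m → ℝ) :=
  {a | (∀ i, 0 < a i) ∧ StrictMono a ∧ ∑ i, a i = 1}

/-!
Write `L_j = inf ψ_j(E)` and let `twoLevel n j t` be the point of `Δ̄⁽ⁿ⁾` that is constant on its
first `j` and on its last `n - j` coordinates and has `ψ_j = t`. Since the points of `E` are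
nondecreasing, `twoLevel n j (ψ_j a)` maximises every `ψ_k` among the points with the same `ψ_j`
as `a`; passing to infima gives `L_k ≤ ψ_k (twoLevel n j L_j)`, and this is all that is used
about `E`.

The system is built in rounds. Round `m` starts with all coordinates equal, lets the last `n - j`
of them rise until `P(q)/q = twoLevel n j w`, where `j` runs cyclically through `1, …, n - 1` and
`w → L_j`, then lets the first `j` coordinates catch up, and finally doubles everything. On each
linear piece `ψ_k(P(q))/q` lies between its values at the two ends, which are `k/n` or
`ψ_k (twoLevel n j w) ≥ (1 - 1/(m+1)) L_k`. The value `w ≈ L_k` is reached in the rounds with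
`j = k`, and `k/n`, an upper bound on `ψ_k` over `Δ̄⁽ⁿ⁾`, at the start of every round.
-/

open Filter Set

section PsiSum

variable {n : ℕ}

lemma psiSum_div (j : ℕ) (x : Fin n → ℝ) (q : ℝ) :
    psiSum n j (fun i => x i / q) = psiSum n j x / q := by
  simp only [psiSum, Finset.sum_div, ite_div, zero_div]

lemma psiSum_smul_add_smul (j : ℕ) (a b : ℝ) (x y : Fin n → ℝ) :
    psiSum n j (a • x + b • y) = a * psiSum n j x + b * psiSum n j y := by
  simp only [psiSum, Finset.mul_sum, ← Finset.sum_add_distrib]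
  refine Finset.sum_congr rfl fun i _ => ?_
  split_ifs <;> simp

lemma psiSum_smul (j : ℕ) (c : ℝ) (x : Fin n → ℝ) : psiSum n j (c • x) = c * psiSum n j x := by
  simpa using psiSum_smul_add_smul j c 0 x 0

lemma psiSum_nonneg {j : ℕ} {x : Fin n → ℝ} (hx : ∀ i, 0 ≤ x i) : 0 ≤ psiSum n j x :=
  Finset.sum_nonneg fun i _ => by split_ifs <;> simp [hx i]

lemma psiSum_zero (x : Fin n → ℝ) : psiSum n 0 x = 0 := by simp [psiSum]

lemma psiSum_self (x : Fin n → ℝ) : psiSum n n x = ∑ i, x i :=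
  Finset.sum_congr rfl fun i _ => if_pos i.2

lemma psiSum_natCast {j : ℕ} (hj : j ≤ n) (f : ℕ → ℝ) :
    psiSum n j (fun i => f i) = ∑ k ∈ Finset.range j, f k := by
  rw [psiSum, Fin.sum_univ_eq_sum_range (fun k => if k < j then f k else 0),
    ← Finset.sum_range_add_sum_Ico _ hj,
    Finset.sum_congr rfl fun k hk => if_pos (Finset.mem_range.1 hk),
    Finset.sum_eq_zero fun k hk => if_neg (Finset.mem_Ico.1 hk).1.not_gt, add_zero]

lemma psiSum_const {j : ℕ} (hj : j ≤ n) (c : ℝ) : psiSum n j (fun _ => c) = j * c := by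
  rw [psiSum_natCast hj (fun _ => c)]
  simp

lemma psiSum_ite_of_le {j t : ℕ} (hjt : j ≤ t) (ht : t ≤ n) (a b : ℝ) :
    psiSum n j (fun i => if (i : ℕ) < t then a else b) = j * a := by
  rw [psiSum_natCast (hjt.trans ht) (fun k => if k < t then a else b),
    Finset.sum_congr rfl fun k hk => if_pos ((Finset.mem_range.1 hk).trans_le hjt)]
  simp

lemma psiSum_ite_of_ge {j t : ℕ} (htj : t ≤ j) (hj : j ≤ n) (a b : ℝ) :
    psiSum n j (fun i => if (i : ℕ) < t then a else b) = t * a + (j - t) * b := by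
  rw [psiSum_natCast hj (fun k => if k < t then a else b), ← Finset.sum_range_add_sum_Ico _ htj,
    Finset.sum_congr rfl fun k hk => if_pos (Finset.mem_range.1 hk),
    Finset.sum_congr rfl fun k hk => if_neg (Finset.mem_Ico.1 hk).1.not_gt]
  simp [Nat.cast_sub htj]

lemma card_mul_sum_le_card_mul_sum {ι : Type*} {s t : Finset ι} {f : ι → ℝ}
    (h : ∀ i ∈ s, ∀ k ∈ t, f i ≤ f k) :
    (t.card : ℝ) * ∑ i ∈ s, f i ≤ s.card * ∑ k ∈ t, f k := by
  calc (t.card : ℝ) * ∑ i ∈ s, f i = ∑ i ∈ s, ∑ _k ∈ t, f i := by simp [Finset.mul_sum]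
    _ ≤ ∑ _i ∈ s, ∑ k ∈ t, f k :=
      Finset.sum_le_sum fun i hi => Finset.sum_le_sum fun k hk => h i hi k hk
    _ = s.card * ∑ k ∈ t, f k := by simp

def natExtend (x : Fin n → ℝ) (k : ℕ) : ℝ := if h : k < n then x ⟨k, h⟩ else 0

lemma psiSum_sub_psiSum {x : Fin n → ℝ} {i j : ℕ} (hij : i ≤ j) (hj : j ≤ n) :
    psiSum n j x - psiSum n i x = ∑ k ∈ Finset.Ico i j, natExtend x k := by
  have h : ∀ {l}, l ≤ n → psiSum n l x = ∑ k ∈ Finset.range l, natExtend x k := fun hl => by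
    rw [← psiSum_natCast hl]
    simp [natExtend]
  rw [h hj, h (hij.trans hj), ← Finset.sum_range_add_sum_Ico _ hij]
  ring

lemma mul_psiSum_sub_le_mul_psiSum_sub {x : Fin n → ℝ} (hx : Monotone x) {i j k : ℕ}
    (hij : i ≤ j) (hjk : j ≤ k) (hk : k ≤ n) :
    ((k : ℝ) - j) * (psiSum n j x - psiSum n i x) ≤
      ((j : ℝ) - i) * (psiSum n k x - psiSum n j x) := by
  have h := card_mul_sum_le_card_mul_sum (f := natExtend x) (s := Finset.Ico i j)
    (t := Finset.Ico j k) fun a ha b hb => by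
      simp only [Finset.mem_Ico] at ha hb
      simp only [natExtend, dif_pos (ha.2.trans_le (hjk.trans hk)), dif_pos (hb.2.trans_le hk)]
      exact hx (Fin.mk_le_mk.2 (by omega))
  rwa [Nat.card_Ico, Nat.card_Ico, Nat.cast_sub hjk, Nat.cast_sub hij,
    ← psiSum_sub_psiSum hij (hjk.trans hk), ← psiSum_sub_psiSum hjk hk] at h

lemma mul_psiSum_le_mul_psiSum {x : Fin n → ℝ} (hx : Monotone x) {j k : ℕ} (hjk : j ≤ k)
    (hk : k ≤ n) : (k : ℝ) * psiSum n j x ≤ j * psiSum n k x := by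
  have h := mul_psiSum_sub_le_mul_psiSum_sub hx (Nat.zero_le j) hjk hk
  rw [psiSum_zero, Nat.cast_zero] at h
  linarith

lemma mul_psiSum_le_mul_psiSum_add {x : Fin n → ℝ} (hx : Monotone x) {i j : ℕ} (hij : i ≤ j)
    (hj : j ≤ n) :
    ((n : ℝ) - i) * psiSum n j x ≤ ((n : ℝ) - j) * psiSum n i x + ((j : ℝ) - i) * ∑ l, x l := by
  have h := mul_psiSum_sub_le_mul_psiSum_sub hx hij hj le_rfl
  rw [psiSum_self] at h
  linarith

lemma psiSum_div_le (hn : 0 < n) {j : ℕ} (hj : j ≤ n) {x : Fin n → ℝ} (hx : Monotone x) {q : ℝ}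
    (hq : 0 < q) (hsum : ∑ i, x i = q) : psiSum n j (fun i => x i / q) ≤ j / n := by
  have h := mul_psiSum_le_mul_psiSum hx hj le_rfl
  rw [psiSum_self, hsum] at h
  rw [psiSum_div, div_le_div_iff₀ hq (by exact_mod_cast hn)]
  linarith

end PsiSum

section TwoLevel

variable {n : ℕ}

/-- The point of `Δ̄⁽ⁿ⁾` with `ψ_j = t` that is constant on the first `j` and on the last `n - j`
coordinates (for `0 < j < n` and `0 ≤ t ≤ j / n`). -/
def twoLevel (n j : ℕ) (t : ℝ) : Fin n → ℝ :=
  fun i => if (i : ℕ) < j then t / j else (1 - t) / (n - j)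

lemma psiSum_twoLevel_of_le {j k : ℕ} (hkj : k ≤ j) (hj : j ≤ n) (t : ℝ) :
    psiSum n k (twoLevel n j t) = k * (t / j) :=
  psiSum_ite_of_le hkj hj _ _

lemma psiSum_twoLevel_of_ge {j k : ℕ} (hj : 0 < j) (hjk : j ≤ k) (hk : k ≤ n) (t : ℝ) :
    psiSum n k (twoLevel n j t) = t + (k - j) * ((1 - t) / (n - j)) := by
  unfold twoLevel
  rw [psiSum_ite_of_ge hjk hk, mul_div_cancel₀ _ (by positivity)]

lemma sum_twoLevel {j : ℕ} (hj : 0 < j) (hjn : j < n) (t : ℝ) : ∑ p, twoLevel n j t p = 1 := by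
  have hnj : (n : ℝ) - j ≠ 0 := sub_ne_zero.2 (by exact_mod_cast hjn.ne')
  rw [← psiSum_self, psiSum_twoLevel_of_ge hj hjn.le le_rfl]
  field_simp
  ring

lemma exists_psiSum_twoLevel_eq {j k : ℕ} (hj : 0 < j) (hjn : j < n) (hk : k ≤ n) :
    ∃ α β : ℝ, 0 ≤ α ∧ 0 ≤ β ∧ ∀ t, psiSum n k (twoLevel n j t) = α + β * t := by
  have hnj : (0 : ℝ) < n - j := sub_pos.2 (by exact_mod_cast hjn)
  rcases le_total k j with hkj | hjk
  · exact ⟨0, k / j, le_rfl, by positivity, fun t => by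
      rw [psiSum_twoLevel_of_le hkj hjn.le]; ring⟩
  · have hkj : (j : ℝ) ≤ k := by exact_mod_cast hjk
    have hkn : (k : ℝ) ≤ n := by exact_mod_cast hk
    refine ⟨(k - j) / (n - j), (n - k) / (n - j), div_nonneg (by linarith) hnj.le,
      div_nonneg (by linarith) hnj.le, fun t => ?_⟩
    rw [psiSum_twoLevel_of_ge hj hjk hk]
    field_simp
    ring

lemma psiSum_le_psiSum_twoLevel {a : Fin n → ℝ} (ha : a ∈ DeltaBar n) {j k : ℕ} (hj : 0 < j)
    (hjn : j < n) (hk : k ≤ n) : psiSum n k a ≤ psiSum n k (twoLevel n j (psiSum n j a)) := by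
  obtain ⟨-, hmono, hsum⟩ := ha
  have hj' : (0 : ℝ) < j := by exact_mod_cast hj
  have hnj : (0 : ℝ) < n - j := sub_pos.2 (by exact_mod_cast hjn)
  rcases le_total k j with hkj | hjk
  · rw [psiSum_twoLevel_of_le hkj hjn.le, mul_div_assoc', le_div_iff₀ hj', mul_comm]
    exact mul_psiSum_le_mul_psiSum hmono hkj hjn.le
  · have h := mul_psiSum_le_mul_psiSum_add hmono hjk hk
    rw [hsum, mul_one] at h
    rw [psiSum_twoLevel_of_ge hj hjk hk, mul_div_assoc', ← sub_le_iff_le_add', le_div_iff₀ hnj]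
    linarith

end TwoLevel

section Infimum

variable {n : ℕ} {E : Set (Fin n → ℝ)}

lemma bddBelow_psiSum_image (hE : E ⊆ DeltaBar n) (j : ℕ) : BddBelow (psiSum n j '' E) :=
  ⟨0, by rintro _ ⟨a, ha, rfl⟩; exact psiSum_nonneg (hE ha).1⟩

lemma sInf_psiSum_nonneg (hE₀ : E.Nonempty) (hE : E ⊆ DeltaBar n) (j : ℕ) :
    0 ≤ sInf (psiSum n j '' E) :=
  le_csInf (hE₀.image _) (by rintro _ ⟨a, ha, rfl⟩; exact psiSum_nonneg (hE ha).1)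

lemma mul_sInf_psiSum_le (hE₀ : E.Nonempty) (hE : E ⊆ DeltaBar n) {j : ℕ} (hj : j ≤ n) :
    n * sInf (psiSum n j '' E) ≤ j := by
  obtain ⟨a, ha⟩ := hE₀
  obtain ⟨-, hmono, hsum⟩ := hE ha
  have h := mul_psiSum_le_mul_psiSum hmono hj le_rfl
  rw [psiSum_self, hsum, mul_one] at h
  exact (mul_le_mul_of_nonneg_left (csInf_le (bddBelow_psiSum_image hE j) ⟨a, ha, rfl⟩)
    (Nat.cast_nonneg n)).trans h

lemma one_le_sInf_psiSum_self (hE₀ : E.Nonempty) (hE : E ⊆ DeltaBar n) :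
    1 ≤ sInf (psiSum n n '' E) :=
  le_csInf (hE₀.image _) (by rintro _ ⟨a, ha, rfl⟩; rw [psiSum_self, (hE ha).2.2])

lemma sInf_psiSum_le_psiSum_twoLevel (hE₀ : E.Nonempty) (hE : E ⊆ DeltaBar n) {j k : ℕ}
    (hj : 0 < j) (hjn : j < n) (hk : k ≤ n) :
    sInf (psiSum n k '' E) ≤ psiSum n k (twoLevel n j (sInf (psiSum n j '' E))) := by
  obtain ⟨α, β, -, hβ, hg⟩ := exists_psiSum_twoLevel_eq (n := n) hj hjn hk
  have hmono : Monotone fun t => psiSum n k (twoLevel n j t) := fun s t hst => by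
    simp only [hg]
    gcongr
  have hcont : Continuous fun t => psiSum n k (twoLevel n j t) := by
    simp only [hg]
    fun_prop
  rw [hmono.map_csInf_of_continuousAt hcont.continuousAt (hE₀.image _)
    (bddBelow_psiSum_image hE j), Set.image_image]
  exact le_csInf (hE₀.image _) fun _ ⟨a, ha, h⟩ =>
    h ▸ (csInf_le (bddBelow_psiSum_image hE k) ⟨a, ha, rfl⟩).trans
      (psiSum_le_psiSum_twoLevel (hE ha) hj hjn hk)

lemma mul_sInf_psiSum_le_psiSum_twoLevel (hE₀ : E.Nonempty) (hE : E ⊆ DeltaBar n) {j k : ℕ}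
    (hj : 0 < j) (hjn : j < n) (hk : k ≤ n) {η t : ℝ} (hη : 0 ≤ η) (hη₁ : η ≤ 1)
    (ht : (1 - η) * sInf (psiSum n j '' E) ≤ t) :
    (1 - η) * sInf (psiSum n k '' E) ≤ psiSum n k (twoLevel n j t) := by
  obtain ⟨α, β, hα, hβ, hg⟩ := exists_psiSum_twoLevel_eq (n := n) hj hjn hk
  have h := sInf_psiSum_le_psiSum_twoLevel hE₀ hE hj hjn hk
  rw [hg] at h ⊢
  nlinarith [mul_le_mul_of_nonneg_left ht hβ, mul_le_mul_of_nonneg_left h (sub_nonneg.2 hη₁),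
    mul_nonneg hη hα]

end Infimum

section OneSided

variable {F : Type*} [NormedAddCommGroup F] [NormedSpace ℝ F] {f g : ℝ → F} {v : F} {a b x : ℝ}

lemma hasDerivWithinAt_Ici_of_eqOn (hg : HasDerivAt g v a) (h : EqOn f g (Icc a b))
    (hab : a < b) : HasDerivWithinAt f v (Ici a) a :=
  hg.hasDerivWithinAt.congr_of_eventuallyEq (eventuallyEq_of_mem (Icc_mem_nhdsGE hab) h)
    (h (left_mem_Icc.2 hab.le))

lemma hasDerivWithinAt_Iic_of_eqOn (hg : HasDerivAt g v b) (h : EqOn f g (Icc a b))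
    (hab : a < b) : HasDerivWithinAt f v (Iic b) b :=
  hg.hasDerivWithinAt.congr_of_eventuallyEq (eventuallyEq_of_mem (Icc_mem_nhdsLE hab) h)
    (h (right_mem_Icc.2 hab.le))

lemma hasDerivAt_of_eqOn (hg : HasDerivAt g v x) (h : EqOn f g (Icc a b)) (hx : x ∈ Ioo a b) :
    HasDerivAt f v x :=
  hg.congr_of_eventuallyEq
    (eventuallyEq_of_mem (Ioo_mem_nhds hx.1 hx.2) fun _ hy => h (Ioo_subset_Icc_self hy))

end OneSided

lemma notMem_nonDiffSet_Ici {n : ℕ} {P : ℝ → Fin n → ℝ} {x : ℝ} (hx : 1 < x)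
    (hd : DifferentiableAt ℝ P x) : x ∉ NonDiffSet n (Ici 1) P := by
  rintro ⟨-, h | h⟩
  · rw [frontier_Ici] at h
    exact hx.ne' h
  · exact h hd

/-- A piecewise linear path with corners `corner 0, corner 1, …`, reached at the times
`∑ p, corner i p`: between consecutive corners the coordinates `lo i, …, hi i` rise together by
`rise i` and the others stay put. -/
structure Staircase (n : ℕ) where
  corner : ℕ → Fin n → ℝ
  lo : ℕ → ℕ
  hi : ℕ → ℕ
  rise : ℕ → ℝ
  lo_le_hi : ∀ i, lo i ≤ hi i
  hi_lt : ∀ i, hi i < n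
  rise_pos : ∀ i, 0 < rise i
  corner_succ : ∀ i (p : Fin n),
    corner (i + 1) p = corner i p + if lo i ≤ p ∧ (p : ℕ) ≤ hi i then rise i else 0
  corner_zero_nonneg : ∀ p, 0 ≤ corner 0 p
  sum_corner_zero : ∑ p, corner 0 p = 1
  monotone_corner : ∀ i, Monotone (corner i)
  corner_eq_of_mem_block : ∀ i (p r : Fin n), lo i ≤ p → (p : ℕ) ≤ hi i → lo i ≤ r →
    (r : ℕ) ≤ hi i → corner i p = corner i r
  corner_succ_eq_of_lo_lt_hi : ∀ i (p r : Fin n), lo i < hi (i + 1) → lo i ≤ p →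
    (p : ℕ) ≤ hi (i + 1) → lo i ≤ r → (r : ℕ) ≤ hi (i + 1) → corner (i + 1) p = corner (i + 1) r
  exists_lt_sum_corner : ∀ x : ℝ, ∃ i, x < ∑ p, corner i p

namespace Staircase

variable {n : ℕ} (S : Staircase n)

lemma n_pos (S : Staircase n) : 0 < n := Nat.pos_of_ne_zero fun h => by
  subst h
  simpa using S.sum_corner_zero

def time (i : ℕ) : ℝ := ∑ p, S.corner i p

def width (i : ℕ) : ℝ := (S.hi i : ℝ) - S.lo i + 1

def slope (i : ℕ) (p : Fin n) : ℝ :=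
  if S.lo i ≤ p ∧ (p : ℕ) ≤ S.hi i then 1 / S.width i else 0

def piece (i : ℕ) (x : ℝ) : Fin n → ℝ := S.corner i + (x - S.time i) • S.slope i

lemma width_pos (i : ℕ) : 0 < S.width i := by
  have : (S.lo i : ℝ) ≤ S.hi i := by exact_mod_cast S.lo_le_hi i
  rw [width]
  linarith

lemma sum_ite_mem_block (i : ℕ) :
    ∑ p : Fin n, (if S.lo i ≤ p ∧ (p : ℕ) ≤ S.hi i then (1 : ℝ) else 0) = S.width i := by
  rw [Fin.sum_univ_eq_sum_range (fun k => if S.lo i ≤ k ∧ k ≤ S.hi i then (1 : ℝ) else 0),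
    Finset.sum_boole]
  have hblock :
      {k ∈ Finset.range n | S.lo i ≤ k ∧ k ≤ S.hi i} = Finset.Icc (S.lo i) (S.hi i) := by
    ext k
    simp only [Finset.mem_filter, Finset.mem_range, Finset.mem_Icc]
    have := S.hi_lt i
    omega
  rw [hblock, Nat.card_Icc, Nat.cast_sub (by have := S.lo_le_hi i; omega), width]
  push_cast
  ring

lemma slope_of_mem {i : ℕ} {p : Fin n} (h₁ : S.lo i ≤ p) (h₂ : (p : ℕ) ≤ S.hi i) :
    S.slope i p = 1 / S.width i :=
  if_pos ⟨h₁, h₂⟩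

lemma slope_ne_zero_iff {i : ℕ} {p : Fin n} :
    S.slope i p ≠ 0 ↔ S.lo i ≤ p ∧ (p : ℕ) ≤ S.hi i := by
  have := S.width_pos i
  rw [slope]
  split_ifs with h <;> simp [h, this.ne']

lemma time_succ (i : ℕ) : S.time (i + 1) = S.time i + S.rise i * S.width i := by
  simp only [time, S.corner_succ, Finset.sum_add_distrib, ← sum_ite_mem_block, Finset.mul_sum,
    mul_ite, mul_one, mul_zero]

lemma time_lt_time_succ (i : ℕ) : S.time i < S.time (i + 1) := by
  rw [time_succ]
  have := mul_pos (S.rise_pos i) (S.width_pos i)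
  linarith

lemma time_strictMono : StrictMono S.time := strictMono_nat_of_lt_succ S.time_lt_time_succ

lemma time_zero : S.time 0 = 1 := S.sum_corner_zero

lemma one_le_time (i : ℕ) : 1 ≤ S.time i :=
  S.time_zero ▸ S.time_strictMono.monotone (Nat.zero_le i)

lemma time_pos (i : ℕ) : 0 < S.time i := zero_lt_one.trans_le (S.one_le_time i)

lemma tendsto_time : Tendsto S.time atTop atTop :=
  tendsto_atTop_atTop_of_monotone S.time_strictMono.monotone fun x =>
    (S.exists_lt_sum_corner x).imp fun _ h => h.le

lemma corner_succ_eq (i : ℕ) :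
    S.corner (i + 1) = S.corner i + (S.time (i + 1) - S.time i) • S.slope i := by
  funext p
  have := (S.width_pos i).ne'
  simp only [Pi.add_apply, Pi.smul_apply, smul_eq_mul, S.corner_succ, slope, time_succ]
  split_ifs <;> field_simp <;> ring

lemma corner_nonneg (i : ℕ) (p : Fin n) : 0 ≤ S.corner i p := by
  induction i with
  | zero => exact S.corner_zero_nonneg p
  | succ i ih =>
    rw [S.corner_succ]
    have := (S.rise_pos i).le
    split_ifs <;> linarith

lemma corner_eq_time_smul {i : ℕ} {c : ℝ} {v : Fin n → ℝ} (h : S.corner i = c • v)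
    (hv : ∑ p, v p = 1) : S.corner i = S.time i • v := by
  rw [time, h]
  simp [← Finset.mul_sum, hv]

lemma piece_time (i : ℕ) : S.piece i (S.time i) = S.corner i := by simp [piece]

lemma piece_time_succ (i : ℕ) : S.piece i (S.time (i + 1)) = S.corner (i + 1) := by
  rw [piece, corner_succ_eq]

lemma hasDerivAt_piece (i : ℕ) (x : ℝ) : HasDerivAt (S.piece i) (S.slope i) x := by
  show HasDerivAt (fun y => S.corner i + (y - S.time i) • S.slope i) _ x
  simpa only [one_smul] using
    (((hasDerivAt_id' x).sub_const (S.time i)).smul_const (S.slope i)).const_add (S.corner i)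

lemma exists_lt_time_succ (x : ℝ) : ∃ i, x < S.time (i + 1) :=
  (S.exists_lt_sum_corner x).imp fun i h => h.trans (S.time_lt_time_succ i)

def index (x : ℝ) : ℕ := Nat.find (S.exists_lt_time_succ x)

/-- The path itself. Below `time 0 = 1` it continues the first linear piece. -/
def path (x : ℝ) : Fin n → ℝ := S.piece (S.index x) x

lemma lt_time_index_succ (x : ℝ) : x < S.time (S.index x + 1) :=
  Nat.find_spec (S.exists_lt_time_succ x)

lemma time_index_le {x : ℝ} (hx : 1 ≤ x) : S.time (S.index x) ≤ x := by
  rcases h : S.index x with _ | k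
  · rwa [time_zero]
  · have hk : k < S.index x := by omega
    exact not_lt.1 (Nat.find_min (S.exists_lt_time_succ x) hk)

lemma index_eq {i : ℕ} {x : ℝ} (h₁ : S.time i ≤ x) (h₂ : x < S.time (i + 1)) : S.index x = i :=
  (Nat.find_eq_iff _).2 ⟨h₂, fun _ hk => not_lt.2 ((S.time_strictMono.monotone hk).trans h₁)⟩

lemma le_index {i : ℕ} {x : ℝ} (h : S.time i ≤ x) : i ≤ S.index x := by
  by_contra! hlt
  exact (S.lt_time_index_succ x).not_ge (h.trans' (S.time_strictMono.monotone hlt))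

lemma path_time (i : ℕ) : S.path (S.time i) = S.corner i := by
  rw [path, S.index_eq le_rfl (S.time_lt_time_succ i), piece_time]

lemma eqOn_piece (i : ℕ) : EqOn S.path (S.piece i) (Icc (S.time i) (S.time (i + 1))) := by
  rintro x ⟨h₁, h₂⟩
  rcases h₂.lt_or_eq with h₂ | rfl
  · rw [path, S.index_eq h₁ h₂]
  · rw [path_time, piece_time_succ]

lemma eqOn_piece_index {x : ℝ} (hx : 1 ≤ x) :
    EqOn S.path (S.piece (S.index x)) (Icc x (S.time (S.index x + 1))) :=
  (S.eqOn_piece _).mono (Icc_subset_Icc_left (S.time_index_le hx))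

lemma exists_index_eq_succ {x : ℝ} (hx : 1 < x) (h : S.time (S.index x) = x) :
    ∃ k, S.index x = k + 1 :=
  Nat.exists_eq_succ_of_ne_zero fun h0 => by
    rw [h0, time_zero] at h
    exact hx.ne h

lemma exists_eqOn_left_right {x : ℝ} (hx : 1 < x) :
    ∃ a b : ℝ, ∃ i i' : ℕ, 1 ≤ a ∧ a < x ∧ x < b ∧
      EqOn S.path (S.piece i) (Icc a x) ∧ EqOn S.path (S.piece i') (Icc x b) := by
  have hlt := S.lt_time_index_succ x
  have hR := S.eqOn_piece_index hx.le
  rcases (S.time_index_le hx.le).lt_or_eq with hle | heq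
  · exact ⟨_, _, _, _, S.one_le_time _, hle, hlt,
      (S.eqOn_piece _).mono (Icc_subset_Icc_right hlt.le), hR⟩
  · obtain ⟨k, hk⟩ := S.exists_index_eq_succ hx heq
    rw [hk] at heq
    exact ⟨_, _, _, _, S.one_le_time k, heq ▸ S.time_lt_time_succ k, hlt, heq ▸ S.eqOn_piece k,
      hR⟩

lemma hasDerivWithinAt_Ici {x : ℝ} (hx : 1 ≤ x) :
    HasDerivWithinAt S.path (S.slope (S.index x)) (Ici x) x :=
  hasDerivWithinAt_Ici_of_eqOn (S.hasDerivAt_piece _ x) (S.eqOn_piece_index hx)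
    (S.lt_time_index_succ x)

lemma hasDerivWithinAt_Iic_time_succ (i : ℕ) :
    HasDerivWithinAt S.path (S.slope i) (Iic (S.time (i + 1))) (S.time (i + 1)) :=
  hasDerivWithinAt_Iic_of_eqOn (S.hasDerivAt_piece _ _) (S.eqOn_piece i) (S.time_lt_time_succ i)

lemma hasDerivWithinAt_Ici_time (i : ℕ) :
    HasDerivWithinAt S.path (S.slope i) (Ici (S.time i)) (S.time i) :=
  hasDerivWithinAt_Ici_of_eqOn (S.hasDerivAt_piece _ _) (S.eqOn_piece i) (S.time_lt_time_succ i)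

lemma deriv_path_apply {x : ℝ} (hx : 1 ≤ x) (hd : DifferentiableAt ℝ S.path x) (p : Fin n) :
    deriv (fun y => S.path y p) x = S.slope (S.index x) p := by
  rw [(hasDerivAt_pi.1 hd.hasDerivAt p).deriv, (uniqueDiffWithinAt_Ici x).eq_deriv _
    hd.hasDerivAt.hasDerivWithinAt (S.hasDerivWithinAt_Ici hx)]

lemma slope_eq_of_differentiableAt {i : ℕ} (hd : DifferentiableAt ℝ S.path (S.time (i + 1))) :
    S.slope i = S.slope (i + 1) :=
  ((uniqueDiffWithinAt_Iic _).eq_deriv _ (S.hasDerivWithinAt_Iic_time_succ i)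
    hd.hasDerivAt.hasDerivWithinAt).trans
  ((uniqueDiffWithinAt_Ici _).eq_deriv _ hd.hasDerivAt.hasDerivWithinAt
    (S.hasDerivWithinAt_Ici_time (i + 1)))

lemma exists_eq_time_succ {x : ℝ} (hx : 1 < x) (hnd : ¬DifferentiableAt ℝ S.path x) :
    ∃ k, x = S.time (k + 1) := by
  rcases (S.time_index_le hx.le).lt_or_eq with hlt | heq
  · exact absurd (hasDerivAt_of_eqOn (S.hasDerivAt_piece _ x) (S.eqOn_piece _)
      ⟨hlt, S.lt_time_index_succ x⟩).differentiableAt hnd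
  · obtain ⟨k, hk⟩ := S.exists_index_eq_succ hx heq
    exact ⟨k, hk ▸ heq.symm⟩

lemma continuousOn_path : ContinuousOn S.path (Ici 1) := fun x hx => by
  have hR := (S.hasDerivWithinAt_Ici hx).continuousWithinAt
  rcases (show (1 : ℝ) ≤ x from hx).eq_or_lt with rfl | hx1
  · exact hR
  · obtain ⟨a, b, i, i', -, hax, -, hL, -⟩ := S.exists_eqOn_left_right hx1
    exact (continuousAt_iff_continuous_left_right.2
      ⟨(hasDerivWithinAt_Iic_of_eqOn (S.hasDerivAt_piece i x) hL hax).continuousWithinAt,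
        hR⟩).continuousWithinAt

lemma discreteIn_nonDiffSet : DiscreteIn (NonDiffSet n (Ici 1) S.path) (Ici 1) := by
  refine ⟨fun x hx => hx.1, fun q hq => ?_⟩
  rcases (show (1 : ℝ) ≤ q from hq).eq_or_lt with rfl | hq1
  · refine ⟨S.time (S.index 1 + 1) - 1, sub_pos.2 (S.lt_time_index_succ 1), ?_⟩
    rintro x ⟨hxD, -, hx⟩
    rcases (show (1 : ℝ) ≤ x from hxD.1).eq_or_lt with rfl | hx1
    · rfl
    · exact absurd hxD (notMem_nonDiffSet_Ici hx1 (hasDerivAt_of_eqOn (S.hasDerivAt_piece _ x)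
        (S.eqOn_piece_index le_rfl) ⟨hx1, by linarith⟩).differentiableAt)
  · obtain ⟨a, b, i, i', ha, hax, hxb, hL, hR⟩ := S.exists_eqOn_left_right hq1
    refine ⟨min (q - a) (b - q), lt_min (sub_pos.2 hax) (sub_pos.2 hxb), ?_⟩
    rintro x ⟨hxD, hx₁, hx₂⟩
    have h₁ := min_le_left (q - a) (b - q)
    have h₂ := min_le_right (q - a) (b - q)
    rcases lt_trichotomy x q with hxq | rfl | hxq
    · exact absurd hxD (notMem_nonDiffSet_Ici (by linarith) (hasDerivAt_of_eqOn
        (S.hasDerivAt_piece i x) hL ⟨by linarith, hxq⟩).differentiableAt)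
    · rfl
    · exact absurd hxD (notMem_nonDiffSet_Ici (by linarith) (hasDerivAt_of_eqOn
        (S.hasDerivAt_piece i' x) hR ⟨hxq, by linarith⟩).differentiableAt)

lemma deriv_locally_const : ∀ q ∈ Ici (1 : ℝ) \ NonDiffSet n (Ici 1) S.path, ∃ ε > (0 : ℝ),
    ∀ x ∈ (Ici 1 \ NonDiffSet n (Ici 1) S.path) ∩ Ioo (q - ε) (q + ε),
      deriv S.path x = deriv S.path q := by
  rintro q ⟨hq, hqD⟩
  have hd : DifferentiableAt ℝ S.path q := by_contra fun h => hqD ⟨hq, Or.inr h⟩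
  have hq1 : 1 < q := (show (1 : ℝ) ≤ q from hq).lt_of_ne fun h =>
    hqD ⟨hq, Or.inl (by rw [frontier_Ici, ← h]; rfl)⟩
  obtain ⟨a, b, i, i', -, hax, hxb, hL, hR⟩ := S.exists_eqOn_left_right hq1
  have hdL : deriv S.path q = S.slope i := (uniqueDiffWithinAt_Iic q).eq_deriv _
    hd.hasDerivAt.hasDerivWithinAt (hasDerivWithinAt_Iic_of_eqOn (S.hasDerivAt_piece i q) hL hax)
  have hdR : deriv S.path q = S.slope i' := (uniqueDiffWithinAt_Ici q).eq_deriv _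
    hd.hasDerivAt.hasDerivWithinAt (hasDerivWithinAt_Ici_of_eqOn (S.hasDerivAt_piece i' q) hR hxb)
  refine ⟨min (q - a) (b - q), lt_min (sub_pos.2 hax) (sub_pos.2 hxb), ?_⟩
  rintro x ⟨-, hx₁, hx₂⟩
  have h₁ := min_le_left (q - a) (b - q)
  have h₂ := min_le_right (q - a) (b - q)
  rcases lt_trichotomy x q with hxq | rfl | hxq
  · rw [hdL, (hasDerivAt_of_eqOn (S.hasDerivAt_piece i x) hL ⟨by linarith, hxq⟩).deriv]
  · rfl
  · rw [hdR, (hasDerivAt_of_eqOn (S.hasDerivAt_piece i' x) hR ⟨hxq, by linarith⟩).deriv]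

lemma exists_path_eq_convex {q : ℝ} (hq : 1 ≤ q) : ∃ θ ∈ Icc (0 : ℝ) 1,
    q = (1 - θ) * S.time (S.index q) + θ * S.time (S.index q + 1) ∧
      S.path q = (1 - θ) • S.corner (S.index q) + θ • S.corner (S.index q + 1) := by
  set i := S.index q
  have h₁ := S.time_index_le hq
  have h₂ := S.lt_time_index_succ q
  have hd : 0 < S.time (i + 1) - S.time i := sub_pos.2 (S.time_lt_time_succ i)
  refine ⟨(q - S.time i) / (S.time (i + 1) - S.time i),
    ⟨div_nonneg (by linarith) hd.le, div_le_one_of_le₀ (by linarith) hd.le⟩, ?_, ?_⟩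
  · field_simp
    ring
  · rw [path, piece, corner_succ_eq]
    funext p
    simp only [Pi.add_apply, Pi.smul_apply, smul_eq_mul]
    field_simp
    ring

lemma nonneg_monotone_sum_path : ∀ q ∈ Ici (1 : ℝ),
    ((∀ p, 0 ≤ S.path q p) ∧ Monotone (S.path q)) ∧ ∑ p, S.path q p = q := by
  intro q hq
  obtain ⟨θ, ⟨h0, h1⟩, hqθ, hP⟩ := S.exists_path_eq_convex hq
  rw [hP]
  refine ⟨⟨fun p => ?_, ?_⟩, ?_⟩
  · simp only [Pi.add_apply, Pi.smul_apply, smul_eq_mul]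
    have := S.corner_nonneg (S.index q) p
    have := S.corner_nonneg (S.index q + 1) p
    have : 0 ≤ 1 - θ := by linarith
    positivity
  · exact ((S.monotone_corner _).const_smul (sub_nonneg.2 h1)).add
      ((S.monotone_corner _).const_smul h0)
  · simp only [Pi.add_apply, Pi.smul_apply, smul_eq_mul, Finset.sum_add_distrib,
      ← Finset.mul_sum]
    exact hqθ.symm

lemma slope_eq_and_corner_eq {a b : ℝ} (hd : ∀ q ∈ Ioo a b, DifferentiableAt ℝ S.path q)
    {i₀ : ℕ} (ha : a < S.time (i₀ + 1)) (k : ℕ) (hk : S.time (i₀ + k) < b) :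
    S.slope (i₀ + k) = S.slope i₀ ∧
      ∀ p, S.slope i₀ p = 0 → S.corner (i₀ + k) p = S.corner i₀ p := by
  induction k with
  | zero => simp
  | succ k ih =>
    obtain ⟨hs, hc⟩ := ih ((S.time_lt_time_succ _).trans hk)
    have hmem : S.time (i₀ + k + 1) ∈ Ioo a b :=
      ⟨ha.trans_le (S.time_strictMono.monotone (by omega)), hk⟩
    refine ⟨(S.slope_eq_of_differentiableAt (hd _ hmem)).symm.trans hs, fun p hp => ?_⟩
    rw [← add_assoc, S.corner_succ_eq]
    simp [hs, hp, hc p hp]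

lemma slope_index_eq_and_corner_index_eq {a b q : ℝ} (ha : 1 ≤ a)
    (hd : ∀ x ∈ Ioo a b, DifferentiableAt ℝ S.path x) (hq : q ∈ Ioo a b) :
    S.slope (S.index q) = S.slope (S.index a) ∧
      ∀ p, S.slope (S.index a) p = 0 → S.corner (S.index q) p = S.corner (S.index a) p := by
  obtain ⟨k, hk⟩ := Nat.exists_eq_add_of_le (S.le_index ((S.time_index_le ha).trans hq.1.le))
  rw [hk]
  exact S.slope_eq_and_corner_eq hd (S.lt_time_index_succ a) k
    (hk ▸ (S.time_index_le (ha.trans hq.1.le)).trans_lt hq.2)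

lemma exists_block_of_differentiableAt : ∀ a b : ℝ, a < b → Ioo a b ⊆ Ici 1 →
    (∀ q ∈ Ioo a b, DifferentiableAt ℝ S.path q) →
    ∃ rlo rhi : Fin n, rlo ≤ rhi ∧
      (∀ j : Fin n, rlo ≤ j → j ≤ rhi → ∀ q ∈ Ioo a b,
        S.path q j = S.path q rlo ∧
        deriv (fun x => S.path x j) q = 1 / (((rhi : ℕ) : ℝ) - ((rlo : ℕ) : ℝ) + 1)) ∧
      (∀ j : Fin n, j < rlo ∨ rhi < j →
        ∀ p ∈ Ioo a b, ∀ q ∈ Ioo a b, S.path p j = S.path q j) := by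
  intro a b hab hsub hd
  have ha : 1 ≤ a := by
    have h := closure_mono hsub (show a ∈ closure (Ioo a b) by
      rw [closure_Ioo hab.ne]; exact left_mem_Icc.2 hab.le)
    rwa [closure_Ici] at h
  have hlo : S.lo (S.index a) < n := (S.lo_le_hi _).trans_lt (S.hi_lt _)
  set rlo : Fin n := ⟨S.lo (S.index a), hlo⟩
  refine ⟨rlo, ⟨S.hi (S.index a), S.hi_lt _⟩, S.lo_le_hi _, fun j hj₁ hj₂ q hq => ?_,
    fun j hj p hp q hq => ?_⟩
  · obtain ⟨hs, -⟩ := S.slope_index_eq_and_corner_index_eq ha hd hq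
    have hsj : S.slope (S.index q) j = 1 / S.width (S.index a) := hs ▸ S.slope_of_mem hj₁ hj₂
    have hsl : S.slope (S.index q) rlo = 1 / S.width (S.index a) :=
      hs ▸ S.slope_of_mem le_rfl (S.lo_le_hi _)
    have hne : 1 / S.width (S.index a) ≠ 0 := one_div_ne_zero (S.width_pos _).ne'
    obtain ⟨hj₁', hj₂'⟩ := S.slope_ne_zero_iff.1 (hsj ▸ hne)
    obtain ⟨hl₁, hl₂⟩ := S.slope_ne_zero_iff.1 (hsl ▸ hne)
    refine ⟨?_, ?_⟩
    · simp only [path, piece, Pi.add_apply, Pi.smul_apply, smul_eq_mul, hsj, hsl,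
        S.corner_eq_of_mem_block _ j rlo hj₁' hj₂' hl₁ hl₂]
    · rw [S.deriv_path_apply (hsub hq) (hd q hq), hsj]
      rfl
  · have hj₀ : S.slope (S.index a) j = 0 := by
      rw [slope, if_neg]
      rcases hj with hj | hj
      · exact fun h => (Fin.lt_def.1 hj).not_ge h.1
      · exact fun h => (Fin.lt_def.1 hj).not_ge h.2
    have hval : ∀ x ∈ Ioo a b, S.path x j = S.corner (S.index a) j := fun x hx => by
      obtain ⟨hs, hc⟩ := S.slope_index_eq_and_corner_index_eq ha hd hx
      simp [path, piece, hs, hj₀, hc j hj₀]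
    rw [hval p hp, hval q hq]

lemma eq_of_not_differentiableAt :
    ∀ q ∈ interior (Ici (1 : ℝ)), ¬DifferentiableAt ℝ S.path q →
    ∀ rlo rhi slo shi : Fin n, rlo ≤ rhi → slo ≤ shi →
      (∀ j : Fin n, rlo ≤ j → j ≤ rhi →
        derivWithin (fun x => S.path x j) (Iic q) q
          = 1 / (((rhi : ℕ) : ℝ) - ((rlo : ℕ) : ℝ) + 1)) →
      (∀ j : Fin n, slo ≤ j → j ≤ shi →
        derivWithin (fun x => S.path x j) (Ici q) q
          = 1 / (((shi : ℕ) : ℝ) - ((slo : ℕ) : ℝ) + 1)) →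
      rlo < shi →
      ∀ i : Fin n, rlo ≤ i → i ≤ shi → S.path q i = S.path q rlo := by
  intro q hq hnd rlo rhi slo shi hr hs hL hR hlt i hi₁ hi₂
  rw [interior_Ici] at hq
  obtain ⟨k, rfl⟩ := S.exists_eq_time_succ hq hnd
  have hL' : S.slope k rlo ≠ 0 := by
    rw [← (hasDerivWithinAt_pi.1 (S.hasDerivWithinAt_Iic_time_succ k) rlo).derivWithin
      (uniqueDiffWithinAt_Iic _), hL rlo le_rfl hr]
    have : ((rlo : ℕ) : ℝ) ≤ rhi := by exact_mod_cast hr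
    exact (one_div_pos.2 (by linarith)).ne'
  have hR' : S.slope (k + 1) shi ≠ 0 := by
    rw [← (hasDerivWithinAt_pi.1 (S.hasDerivWithinAt_Ici_time (k + 1)) shi).derivWithin
      (uniqueDiffWithinAt_Ici _), hR shi hs le_rfl]
    have : ((slo : ℕ) : ℝ) ≤ shi := by exact_mod_cast hs
    exact (one_div_pos.2 (by linarith)).ne'
  obtain ⟨hk₁, -⟩ := S.slope_ne_zero_iff.1 hL'
  obtain ⟨-, hk₂⟩ := S.slope_ne_zero_iff.1 hR'
  have hlt' : (rlo : ℕ) < shi := hlt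
  have hi₁' : (rlo : ℕ) ≤ i := hi₁
  have hi₂' : (i : ℕ) ≤ shi := hi₂
  rw [path_time]
  exact S.corner_succ_eq_of_lo_lt_hi k i rlo (by omega) (by omega) (by omega) hk₁ (by omega)

theorem isGenNSystem : IsGenNSystem n (Ici 1) S.path :=
  ⟨⟨S.continuousOn_path, S.discreteIn_nonDiffSet, S.deriv_locally_const⟩,
    S.nonneg_monotone_sum_path, S.exists_block_of_differentiableAt, S.eq_of_not_differentiableAt⟩

lemma eventually_psiSum_div_mem {j : ℕ} (hj : j ≤ n) : ∀ᶠ q in atTop,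
    0 ≤ psiSum n j (fun i => S.path q i / q) ∧ psiSum n j (fun i => S.path q i / q) ≤ j / n := by
  filter_upwards [eventually_ge_atTop 1] with q hq
  obtain ⟨⟨hnonneg, hmono⟩, hsum⟩ := S.nonneg_monotone_sum_path q hq
  have hq₀ : 0 < q := one_pos.trans_le hq
  exact ⟨psiSum_nonneg fun i => div_nonneg (hnonneg i) hq₀.le,
    psiSum_div_le S.n_pos hj hmono hq₀ hsum⟩

lemma mul_le_psiSum_path {i₀ j : ℕ} {C : ℝ}
    (h : ∀ i, i₀ ≤ i → C * S.time i ≤ psiSum n j (S.corner i)) {q : ℝ} (hq : S.time i₀ ≤ q) :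
    C * q ≤ psiSum n j (S.path q) := by
  have hi := S.le_index hq
  obtain ⟨θ, ⟨h0, h1⟩, hqθ, hP⟩ := S.exists_path_eq_convex ((S.one_le_time i₀).trans hq)
  have e₁ := mul_le_mul_of_nonneg_left (h _ hi) (sub_nonneg.2 h1)
  have e₂ := mul_le_mul_of_nonneg_left (h _ (hi.trans (Nat.le_succ _))) h0
  rw [hP, psiSum_smul_add_smul]
  linear_combination C * hqθ + e₁ + e₂

lemma psiSum_path_time_div {i j : ℕ} {v : Fin n → ℝ} (h : S.corner i = S.time i • v) :
    psiSum n j (fun p => S.path (S.time i) p / S.time i) = psiSum n j v := by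
  rw [path_time, h]
  simp [(S.time_pos i).ne']

end Staircase

/-- In round `m` the path passes through a multiple of `twoLevel n (split m) (level m)`. -/
structure LevelTargets (n : ℕ) where
  split : ℕ → ℕ
  level : ℕ → ℝ
  split_pos : ∀ m, 0 < split m
  split_lt : ∀ m, split m < n
  level_pos : ∀ m, 0 < level m
  mul_level_lt : ∀ m, n * level m < split m

namespace LevelTargets

variable {n : ℕ} (T : LevelTargets n)

/-- The quotient of the two values taken by `twoLevel n (split m) (level m)`. -/
def ratio (m : ℕ) : ℝ := T.split m * (1 - T.level m) / ((n - T.split m) * T.level m)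

/-- The common value of all coordinates at the start of round `m`. -/
def base : ℕ → ℝ
  | 0 => 1 / n
  | m + 1 => 2 * T.ratio m * base m

/-- Round `m` occupies the pieces `3m, 3m+1, 3m+2`: first the last `n - split m` coordinates
rise from `base m` to `ratio m * base m`, then the first `split m` ones catch up, and finally
all of them double together. -/
def corner (i : ℕ) (p : Fin n) : ℝ :=
  if i % 3 = 0 ∨ (i % 3 = 1 ∧ (p : ℕ) < T.split (i / 3)) then T.base (i / 3)
  else T.ratio (i / 3) * T.base (i / 3)

def lo (i : ℕ) : ℕ := if i % 3 = 0 then T.split (i / 3) else 0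

def hi (i : ℕ) : ℕ := if i % 3 = 1 then T.split (i / 3) - 1 else n - 1

def rise (i : ℕ) : ℝ :=
  if i % 3 = 2 then T.ratio (i / 3) * T.base (i / 3)
  else T.ratio (i / 3) * T.base (i / 3) - T.base (i / 3)

lemma n_pos (T : LevelTargets n) : 0 < n := (T.split_lt 0).pos

lemma one_lt_ratio (m : ℕ) : 1 < T.ratio m := by
  have hw := T.level_pos m
  have hlt := T.mul_level_lt m
  have hjn : (T.split m : ℝ) < n := by exact_mod_cast T.split_lt m
  rw [ratio, one_lt_div (mul_pos (sub_pos.2 hjn) hw)]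
  nlinarith

lemma base_pos (m : ℕ) : 0 < T.base m := by
  induction m with
  | zero =>
    have := T.n_pos
    simp only [base]
    positivity
  | succ m ih =>
    have := T.one_lt_ratio m
    simp only [base]
    positivity

lemma pow_le_mul_base (m : ℕ) : (2 : ℝ) ^ m ≤ n * T.base m := by
  induction m with
  | zero =>
    have : (n : ℝ) ≠ 0 := by exact_mod_cast T.n_pos.ne'
    simp [base, this]
  | succ m ih =>
    have h := mul_le_mul_of_nonneg_right (T.one_lt_ratio m).le
      (mul_nonneg (Nat.cast_nonneg n) (T.base_pos m).le)
    rw [base, pow_succ]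
    nlinarith

lemma exists_round (i : ℕ) : ∃ m, i = 3 * m ∨ i = 3 * m + 1 ∨ i = 3 * m + 2 := ⟨i / 3, by omega⟩

section Rounds

variable (m : ℕ)

lemma corner_three_mul : T.corner (3 * m) = fun _ => T.base m := by
  funext p
  simp [corner]

lemma corner_three_mul_add_one (p : Fin n) : T.corner (3 * m + 1) p =
    if (p : ℕ) < T.split m then T.base m else T.ratio m * T.base m := by
  simp [corner, show (3 * m + 1) % 3 = 1 by omega, show (3 * m + 1) / 3 = m by omega]

lemma corner_three_mul_add_two : T.corner (3 * m + 2) = fun _ => T.ratio m * T.base m := by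
  funext p
  simp [corner, show (3 * m + 2) % 3 = 2 by omega, show (3 * m + 2) / 3 = m by omega]

lemma lo_three_mul : T.lo (3 * m) = T.split m := by simp [lo]

lemma lo_three_mul_add_one : T.lo (3 * m + 1) = 0 := by
  simp [lo, show (3 * m + 1) % 3 = 1 by omega]

lemma lo_three_mul_add_two : T.lo (3 * m + 2) = 0 := by
  simp [lo, show (3 * m + 2) % 3 = 2 by omega]

lemma hi_three_mul : T.hi (3 * m) = n - 1 := by simp [hi]

lemma hi_three_mul_add_one : T.hi (3 * m + 1) = T.split m - 1 := by
  simp [hi, show (3 * m + 1) % 3 = 1 by omega, show (3 * m + 1) / 3 = m by omega]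

lemma hi_three_mul_add_two : T.hi (3 * m + 2) = n - 1 := by
  simp [hi, show (3 * m + 2) % 3 = 2 by omega]

lemma rise_three_mul : T.rise (3 * m) = T.ratio m * T.base m - T.base m := by simp [rise]

lemma rise_three_mul_add_one : T.rise (3 * m + 1) = T.ratio m * T.base m - T.base m := by
  simp [rise, show (3 * m + 1) % 3 = 1 by omega, show (3 * m + 1) / 3 = m by omega]

lemma rise_three_mul_add_two : T.rise (3 * m + 2) = T.ratio m * T.base m := by
  simp [rise, show (3 * m + 2) % 3 = 2 by omega, show (3 * m + 2) / 3 = m by omega]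

end Rounds

def staircase : Staircase n where
  corner := T.corner
  lo := T.lo
  hi := T.hi
  rise := T.rise
  lo_le_hi i := by
    obtain ⟨m, rfl | rfl | rfl⟩ := exists_round i <;> have := T.split_lt m <;>
      simp only [lo_three_mul, hi_three_mul, lo_three_mul_add_one, hi_three_mul_add_one,
        lo_three_mul_add_two, hi_three_mul_add_two] <;> omega
  hi_lt i := by
    obtain ⟨m, rfl | rfl | rfl⟩ := exists_round i <;> have := T.split_lt m <;>
      simp only [hi_three_mul, hi_three_mul_add_one, hi_three_mul_add_two] <;> omega
  rise_pos i := by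
    obtain ⟨m, rfl | rfl | rfl⟩ := exists_round i <;>
      have := T.one_lt_ratio m <;> have := T.base_pos m <;>
      simp only [rise_three_mul, rise_three_mul_add_one, rise_three_mul_add_two] <;>
      nlinarith
  corner_succ i p := by
    have hp := p.2
    obtain ⟨m, rfl | rfl | rfl⟩ := exists_round i
    · rw [corner_three_mul, corner_three_mul_add_one, lo_three_mul, hi_three_mul, rise_three_mul]
      split_ifs <;> first | (exfalso; omega) | ring
    · have := T.split_pos m
      rw [corner_three_mul_add_one, corner_three_mul_add_two, lo_three_mul_add_one,
        hi_three_mul_add_one, rise_three_mul_add_one]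
      split_ifs <;> first | (exfalso; omega) | ring
    · rw [show 3 * m + 2 + 1 = 3 * (m + 1) by ring, corner_three_mul, corner_three_mul_add_two,
        lo_three_mul_add_two, hi_three_mul_add_two, rise_three_mul_add_two, if_pos (by omega),
        base]
      ring
  corner_zero_nonneg _ := (T.base_pos 0).le
  sum_corner_zero := by
    have : (n : ℝ) ≠ 0 := by exact_mod_cast T.n_pos.ne'
    simp [corner, base, this]
  monotone_corner i p r hpr := by
    have hpr' : (p : ℕ) ≤ r := hpr
    obtain ⟨m, rfl | rfl | rfl⟩ := exists_round i
    · simp [corner_three_mul]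
    · have := T.one_lt_ratio m
      have := T.base_pos m
      rw [corner_three_mul_add_one, corner_three_mul_add_one]
      split_ifs <;> nlinarith
    · simp [corner_three_mul_add_two]
  corner_eq_of_mem_block i p r _ hp₂ _ hr₂ := by
    obtain ⟨m, rfl | rfl | rfl⟩ := exists_round i
    · simp [corner_three_mul]
    · have := T.split_pos m
      rw [hi_three_mul_add_one] at hp₂ hr₂
      rw [corner_three_mul_add_one, corner_three_mul_add_one, if_pos (by omega),
        if_pos (by omega)]
    · simp [corner_three_mul_add_two]
  corner_succ_eq_of_lo_lt_hi i p r hlt _ _ _ _ := by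
    obtain ⟨m, rfl | rfl | rfl⟩ := exists_round i
    · rw [lo_three_mul, hi_three_mul_add_one] at hlt
      omega
    · simp [corner_three_mul_add_two]
    · simp [show 3 * m + 2 + 1 = 3 * (m + 1) by ring, corner_three_mul]
  exists_lt_sum_corner x := by
    obtain ⟨m, hm⟩ := pow_unbounded_of_one_lt x one_lt_two
    exact ⟨3 * m, by simpa [corner_three_mul] using hm.trans_le (T.pow_le_mul_base m)⟩

lemma staircase_corner_three_mul (m : ℕ) :
    T.staircase.corner (3 * m) = T.staircase.time (3 * m) • fun _ => 1 / (n : ℝ) := by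
  have : (n : ℝ) ≠ 0 := by exact_mod_cast T.n_pos.ne'
  refine T.staircase.corner_eq_time_smul (c := n * T.base m) ?_ (by simp [this])
  funext p
  simp only [staircase, corner_three_mul, Pi.smul_apply, smul_eq_mul]
  field_simp

lemma staircase_corner_three_mul_add_one (m : ℕ) :
    T.staircase.corner (3 * m + 1) =
      T.staircase.time (3 * m + 1) • twoLevel n (T.split m) (T.level m) := by
  refine T.staircase.corner_eq_time_smul (c := T.split m * T.base m / T.level m) ?_
    (sum_twoLevel (T.split_pos m) (T.split_lt m) _)
  have hj : (0 : ℝ) < T.split m := by exact_mod_cast T.split_pos m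
  have hnj : (0 : ℝ) < n - T.split m := sub_pos.2 (by exact_mod_cast T.split_lt m)
  have hw := T.level_pos m
  funext p
  simp only [staircase, corner_three_mul_add_one, twoLevel, Pi.smul_apply, smul_eq_mul, ratio]
  split_ifs <;> field_simp

lemma staircase_corner_three_mul_add_two (m : ℕ) :
    T.staircase.corner (3 * m + 2) = T.staircase.time (3 * m + 2) • fun _ => 1 / (n : ℝ) := by
  have : (n : ℝ) ≠ 0 := by exact_mod_cast T.n_pos.ne'
  refine T.staircase.corner_eq_time_smul (c := n * (T.ratio m * T.base m)) ?_ (by simp [this])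
  funext p
  simp only [staircase, corner_three_mul_add_two, Pi.smul_apply, smul_eq_mul]
  field_simp

lemma le_psiSum_path_div {j M : ℕ} (hj : j ≤ n) {C : ℝ} (hC : C ≤ j / n)
    (hC' : ∀ m, M ≤ m → C ≤ psiSum n j (twoLevel n (T.split m) (T.level m))) {q : ℝ}
    (hq : T.staircase.time (3 * M) ≤ q) :
    C ≤ psiSum n j (fun i => T.staircase.path q i / q) := by
  rw [psiSum_div, le_div_iff₀ ((T.staircase.time_pos _).trans_le hq)]
  refine T.staircase.mul_le_psiSum_path (fun i hi => ?_) hq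
  have hC₀ : C ≤ psiSum n j (fun _ => 1 / (n : ℝ)) := by
    rwa [psiSum_const hj, ← div_eq_mul_one_div]
  have htime := (T.staircase.time_pos i).le
  rw [mul_comm C]
  obtain ⟨m, rfl | rfl | rfl⟩ := exists_round i
  · rw [staircase_corner_three_mul, psiSum_smul]
    exact mul_le_mul_of_nonneg_left hC₀ htime
  · rw [staircase_corner_three_mul_add_one, psiSum_smul]
    exact mul_le_mul_of_nonneg_left (hC' m (by omega)) htime
  · rw [staircase_corner_three_mul_add_two, psiSum_smul]
    exact mul_le_mul_of_nonneg_left hC₀ htime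

lemma limsup_psiSum_path_div {j : ℕ} (hj : j ≤ n) :
    limsup (fun q => psiSum n j (fun i => T.staircase.path q i / q)) atTop = j / n := by
  have hmem := T.staircase.eventually_psiSum_div_mem hj
  refine le_antisymm (limsup_le_of_le ?_ (hmem.mono fun _ h => h.2))
    (le_limsup_of_frequently_le ?_ (isBoundedUnder_of_eventually_le (hmem.mono fun _ h => h.2)))
  · exact (isBoundedUnder_of_eventually_ge (hmem.mono fun _ h => h.1)).isCoboundedUnder_le
  · refine (T.staircase.tendsto_time.comp (StrictMono.tendsto_atTop fun a b h => by omega :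
      Tendsto (fun m => 3 * m) atTop atTop)).frequently (Frequently.of_forall fun m => ?_)
    rw [Function.comp_apply, T.staircase.psiSum_path_time_div (T.staircase_corner_three_mul m),
      psiSum_const hj, ← div_eq_mul_one_div]

end LevelTargets

lemma liminf_eq_of_forall_pos {α : Type*} {l : Filter α} [l.NeBot] {f : α → ℝ} {a : ℝ}
    (h₁ : IsBoundedUnder (· ≤ ·) l f) (h₂ : IsBoundedUnder (· ≥ ·) l f)
    (hge : ∀ ε > 0, ∀ᶠ x in l, a - ε ≤ f x) (hle : ∀ ε > 0, ∃ᶠ x in l, f x ≤ a + ε) :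
    liminf f l = a :=
  le_antisymm (le_of_forall_pos_le_add fun ε hε => liminf_le_of_frequently_le (hle ε hε) h₂)
    (le_of_forall_sub_le fun ε hε => le_liminf_of_le h₁.isCoboundedUnder_ge (hge ε hε))

lemma one_div_succ_le_one (m : ℕ) : 1 / ((m : ℝ) + 1) ≤ 1 := by
  simpa using Nat.one_div_le_one_div (α := ℝ) (Nat.zero_le m)

section Prescribed

variable {n : ℕ}

/-- Round `m` visits `twoLevel n j w` with `j = m % (n - 1) + 1` running cyclically through
`1, …, n - 1` and `(1 - 1/(m+1)) inf ψ_j(E) ≤ w ≤ inf ψ_j(E) + 1/(m+1)`; the term `j / (2n)`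
keeps `w` inside `(0, j/n)`. -/
def prescribedTargets (hn : 2 ≤ n) (E : Set (Fin n → ℝ)) (hE₀ : E.Nonempty)
    (hE : E ⊆ DeltaBar n) : LevelTargets n where
  split m := m % (n - 1) + 1
  level m := (1 - 1 / ((m : ℝ) + 1)) * sInf (psiSum n (m % (n - 1) + 1) '' E) +
    1 / ((m : ℝ) + 1) * (((m % (n - 1) + 1 : ℕ) : ℝ) / (2 * n))
  split_pos _ := Nat.succ_pos _
  split_lt m := by
    have := Nat.mod_lt m (show 0 < n - 1 by omega)
    omega
  level_pos m := by
    have := sInf_psiSum_nonneg hE₀ hE (m % (n - 1) + 1)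
    have := one_div_succ_le_one m
    have : (0 : ℝ) < n := by exact_mod_cast (show 0 < n by omega)
    have : 0 ≤ 1 - 1 / ((m : ℝ) + 1) := by linarith
    positivity
  mul_level_lt m := by
    have hL := mul_sInf_psiSum_le hE₀ hE (j := m % (n - 1) + 1)
      (by have := Nat.mod_lt m (show 0 < n - 1 by omega); omega)
    set η : ℝ := 1 / ((m : ℝ) + 1)
    set j : ℝ := ((m % (n - 1) + 1 : ℕ) : ℝ)
    have hη : 0 < η := by positivity
    have hη₁ : η ≤ 1 := one_div_succ_le_one m
    have hj : 0 < j := by positivity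
    have hn' : (n : ℝ) ≠ 0 := by exact_mod_cast (show n ≠ 0 by omega)
    have hsplit : (n : ℝ) * (η * (j / (2 * n))) = η * j / 2 := by field_simp
    rw [mul_add, hsplit, mul_left_comm]
    nlinarith [mul_le_mul_of_nonneg_left hL (sub_nonneg.2 hη₁)]

variable (hn : 2 ≤ n) {E : Set (Fin n → ℝ)} (hE₀ : E.Nonempty) (hE : E ⊆ DeltaBar n)

lemma prescribedTargets_level (m : ℕ) : (prescribedTargets hn E hE₀ hE).level m =
    (1 - 1 / ((m : ℝ) + 1)) * sInf (psiSum n ((prescribedTargets hn E hE₀ hE).split m) '' E) +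
      1 / ((m : ℝ) + 1) * (((prescribedTargets hn E hE₀ hE).split m : ℝ) / (2 * n)) :=
  rfl

lemma eventually_sub_le_psiSum_prescribed {j : ℕ} (hjn : j ≤ n) {ε : ℝ} (hε : 0 < ε) :
    ∀ᶠ q in atTop, sInf (psiSum n j '' E) - ε ≤
      psiSum n j (fun i => (prescribedTargets hn E hE₀ hE).staircase.path q i / q) := by
  set T := prescribedTargets hn E hE₀ hE
  set L := sInf (psiSum n j '' E)
  have hL₀ : 0 ≤ L := sInf_psiSum_nonneg hE₀ hE j
  have hLn : L ≤ j / n := by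
    rw [le_div_iff₀ (by exact_mod_cast (show 0 < n by omega)), mul_comm]
    exact mul_sInf_psiSum_le hE₀ hE hjn
  have hL₁ : L ≤ 1 := hLn.trans (div_le_one_of_le₀ (by exact_mod_cast hjn) (Nat.cast_nonneg n))
  obtain ⟨M, hM⟩ := exists_nat_one_div_lt hε
  have hηM : (0 : ℝ) ≤ 1 / ((M : ℝ) + 1) := by positivity
  filter_upwards [eventually_ge_atTop (T.staircase.time (3 * M))] with q hq
  refine le_trans ?_ (T.le_psiSum_path_div hjn (C := (1 - 1 / ((M : ℝ) + 1)) * L) ?_ ?_ hq)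
  · nlinarith [mul_le_mul_of_nonneg_right hM.le hL₀]
  · nlinarith [mul_nonneg hηM hL₀]
  · intro m hm
    have hηm := Nat.one_div_le_one_div (α := ℝ) hm
    refine le_trans ?_ (mul_sInf_psiSum_le_psiSum_twoLevel hE₀ hE (T.split_pos m) (T.split_lt m)
      hjn (by positivity) (one_div_succ_le_one m) (le_add_of_nonneg_right ?_))
    · exact mul_le_mul_of_nonneg_right (by linarith) hL₀
    · have : (0 : ℝ) < n := by exact_mod_cast (show 0 < n by omega)
      positivity

lemma frequently_psiSum_prescribed_le {j : ℕ} (hj : 1 ≤ j) (hjn : j < n) {ε : ℝ}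
    (hε : 0 < ε) : ∃ᶠ q in atTop,
      psiSum n j (fun i => (prescribedTargets hn E hE₀ hE).staircase.path q i / q) ≤
        sInf (psiSum n j '' E) + ε := by
  set T := prescribedTargets hn E hE₀ hE
  have hsplit : ∃ᶠ m in atTop, T.split m = j := frequently_atTop.2 fun N =>
    ⟨(n - 1) * N + (j - 1), by nlinarith [Nat.le_mul_of_pos_left N (show 0 < n - 1 by omega)], by
      show ((n - 1) * N + (j - 1)) % (n - 1) + 1 = j
      rw [Nat.mul_add_mod, Nat.mod_eq_of_lt (by omega)]
      omega⟩
  have hsmall : ∀ᶠ m : ℕ in atTop, 1 / ((m : ℝ) + 1) < ε :=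
    tendsto_one_div_add_atTop_nhds_zero_nat.eventually (gt_mem_nhds hε)
  refine (T.staircase.tendsto_time.comp (StrictMono.tendsto_atTop fun a b h => by omega :
    Tendsto (fun m => 3 * m + 1) atTop atTop)).frequently
    ((hsplit.and_eventually hsmall).mono fun m ⟨hm, hmε⟩ => ?_)
  have hL := sInf_psiSum_nonneg hE₀ hE j
  have hη₀ : (0 : ℝ) ≤ 1 / ((m : ℝ) + 1) := by positivity
  have hjn' : (j : ℝ) / (2 * n) ≤ 1 := by
    rw [div_le_one (by positivity)]
    have : (j : ℝ) ≤ n := by exact_mod_cast hjn.le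
    linarith
  rw [Function.comp_apply,
    T.staircase.psiSum_path_time_div (T.staircase_corner_three_mul_add_one m), hm,
    psiSum_twoLevel_of_le le_rfl hjn.le, mul_div_cancel₀ _ (by positivity),
    prescribedTargets_level, hm]
  nlinarith [mul_le_mul_of_nonneg_left hjn' hη₀]

theorem liminf_psiSum_prescribed {j : ℕ} (hj : 1 ≤ j) (hjn : j ≤ n) :
    liminf (fun q => psiSum n j (fun i => (prescribedTargets hn E hE₀ hE).staircase.path q i / q))
      atTop = sInf (psiSum n j '' E) := by
  have hmem := (prescribedTargets hn E hE₀ hE).staircase.eventually_psiSum_div_mem hjn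
  refine liminf_eq_of_forall_pos (isBoundedUnder_of_eventually_le (hmem.mono fun _ h => h.2))
    (isBoundedUnder_of_eventually_ge (hmem.mono fun _ h => h.1))
    (fun ε hε => eventually_sub_le_psiSum_prescribed hn hE₀ hE hjn hε) fun ε hε => ?_
  rcases hjn.lt_or_eq with hjn | rfl
  · exact frequently_psiSum_prescribed_le hn hE₀ hE hj hjn hε
  · have h₁ := one_le_sInf_psiSum_self hE₀ hE
    refine (hmem.mono fun q h => ?_).frequently
    have : (j : ℝ) / j = 1 := div_self (by exact_mod_cast (show j ≠ 0 by omega))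
    linarith [h.2]

end Prescribed

/-- Proposition 5.4: for any nonempty `E ⊆ Δ̄⁽ⁿ⁾` there is a generalized
`n`-system `P` on `[1,∞)` with `liminf_{q→∞} ψ_j(q⁻¹P(q)) = inf ψ_j(E)` and
`limsup_{q→∞} ψ_j(q⁻¹P(q)) = j/n` for `j = 1,…,n`. -/
theorem exists_gen_nsystem_prescribed (n : ℕ) (hn : 2 ≤ n)
    (E : Set (Fin n → ℝ)) (hE₀ : E.Nonempty) (hE₁ : E ⊆ DeltaBar n) :
    ∃ P : ℝ → Fin n → ℝ, IsGenNSystem n (Set.Ici 1) P ∧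
      ∀ j : ℕ, 1 ≤ j → j ≤ n →
        Filter.liminf (fun q : ℝ => psiSum n j (fun i => P q i / q)) Filter.atTop
          = sInf (psiSum n j '' E) ∧
        Filter.limsup (fun q : ℝ => psiSum n j (fun i => P q i / q)) Filter.atTop
          = (j : ℝ) / n :=
  ⟨(prescribedTargets hn E hE₀ hE₁).staircase.path, Staircase.isGenNSystem _, fun _ hj hjn =>
    ⟨liminf_psiSum_prescribed hn hE₀ hE₁ hj hjn, LevelTargets.limsup_psiSum_path_div _ hjn⟩⟩
end
end
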